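/- arXiv:2303.12324 — 10 statements merged into one kernel-verified Lean document; each statement's English description precedes it below -/
import Mathlib

section
/- Let R be a commutative ring of characteristic p > 0 and let R[F;σ] be the skew polynomial ring where Fλ = λ^p F. An element ∑_{i=0}^n λ_i F^i of R[F;σ] is nilpotent if and only if all coefficients λ_0, ..., λ_n are nilpotent in R. -/
/-- Multiplication in the skew polynomial ring `R[F;σ]`, `F·λ = λ^p·F`, on
coefficient sequences: `(P*Q)_k = ∑_{i+j=k} P_i · Q_j^{p^i}`. -/
def skewMul {R : Type*} [CommRing R] (p : ℕ) (P Q : ℕ → R) : ℕ → R :=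
  fun k => ∑ i ∈ Finset.range (k + 1), P i * (Q (k - i)) ^ (p ^ i)

/-- The unit element of the skew polynomial ring. -/
def skewOne (R : Type*) [CommRing R] : ℕ → R := fun k => if k = 0 then 1 else 0

/-- Powers in the skew polynomial ring. -/
def skewPow {R : Type*} [CommRing R] (p : ℕ) (P : ℕ → R) : ℕ → (ℕ → R)
  | 0 => skewOne R
  | m + 1 => skewMul p P (skewPow p P m)

lemma skewPow_map {R S : Type*} [CommRing R] [CommRing S] (f : R →+* S) (p : ℕ)
    (P : ℕ → R) (m : ℕ) (k : ℕ) :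
    f (skewPow p P m k) = skewPow p (f ∘ P) m k := by
  induction m generalizing k with
  | zero =>
      simp only [skewPow, skewOne]
      split <;> simp
  | succ m ih =>
      simp only [skewPow, skewMul, map_sum]
      refine Finset.sum_congr rfl fun i _ => ?_
      rw [map_mul, map_pow, ih]; rfl

/-- degree bound -/
lemma skewPow_degree {R : Type*} [CommRing R] (p : ℕ) (hp : 0 < p) (d : ℕ) (P : ℕ → R)
    (h : ∀ i, d < i → P i = 0) : ∀ m k, m * d < k → skewPow p P m k = 0 := by
  intro m
  induction m with
  | zero =>
      intro k hk
      simp only [Nat.zero_mul] at hk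
      simp [skewPow, skewOne, hk.ne']
  | succ m ih =>
      intro k hk
      have hk' : m * d + d < k := by rw [Nat.succ_mul] at hk; omega
      simp only [skewPow, skewMul]
      refine Finset.sum_eq_zero fun i hi => ?_
      rcases le_or_gt i d with hid | hid
      · rw [ih (k - i) (by omega), zero_pow (pow_pos hp i).ne', mul_zero]
      · rw [h i hid, zero_mul]

/-- leading coefficient in a domain -/
lemma skewPow_leading {R : Type*} [CommRing R] [IsDomain R] (p : ℕ) (hp : 0 < p)
    (d : ℕ) (P : ℕ → R) (hd : P d ≠ 0) (h : ∀ i, d < i → P i = 0) :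
    ∀ m, skewPow p P m (m * d) ≠ 0 := by
  intro m
  induction m with
  | zero => simp [skewPow, skewOne]
  | succ m ih =>
      have hsm : (m + 1) * d = m * d + d := by ring
      simp only [skewPow, skewMul, hsm]
      have hmem : d ∈ Finset.range (m * d + d + 1) := by
        simp [Finset.mem_range]
      rw [Finset.sum_eq_single d]
      · have : m * d + d - d = m * d := by omega
        rw [this]
        exact mul_ne_zero hd (pow_ne_zero _ ih)
      · intro i _ hne
        rcases lt_or_gt_of_ne hne with hlt | hgt
        · rw [skewPow_degree p hp d P h m (m * d + d - i) (by omega),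
            zero_pow (pow_pos hp i).ne', mul_zero]
        · rw [h i hgt, zero_mul]
      · intro habs; exact absurd hmem habs

lemma span_nilpotent {R : Type*} [CommRing R] (s : Finset R)
    (h : ∀ x ∈ s, IsNilpotent x) : IsNilpotent (Ideal.span (s : Set R)) := by
  classical
  induction s using Finset.induction with
  | empty => exact ⟨1, by simp [Ideal.span_empty]⟩
  | @insert a s ha ih =>
      rw [Finset.coe_insert, Ideal.span_insert, ← Submodule.add_eq_sup]
      have ha' : IsNilpotent (Ideal.span {a} : Ideal R) := by
        obtain ⟨m, hm⟩ := h a (Finset.mem_insert_self a s)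
        exact ⟨m, by rw [Ideal.span_singleton_pow, hm, Ideal.span_singleton_eq_bot.mpr rfl]; rfl⟩
      exact (Commute.all _ _).isNilpotent_add ha' (ih fun x hx => h x (Finset.mem_insert_of_mem hx))

lemma skewPow_mem_pow {R : Type*} [CommRing R] (p : ℕ) (hp : 0 < p) (P : ℕ → R)
    (I : Ideal R) (hPI : ∀ i, P i ∈ I) : ∀ m k, skewPow p P m k ∈ I ^ m := by
  intro m
  induction m with
  | zero => intro k; simp [Ideal.one_eq_top]
  | succ m ih =>
      intro k
      simp only [skewPow, skewMul]
      refine Ideal.sum_mem _ fun i _ => ?_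
      have h1 : (skewPow p P m (k - i)) ^ (p ^ i) ∈ I ^ m := by
        rw [← Nat.succ_pred_eq_of_pos (pow_pos hp i), pow_succ]
        exact Ideal.mul_mem_left _ _ (ih (k - i))
      rw [pow_succ, mul_comm (P i)]
      exact Ideal.mul_mem_mul h1 (hPI i)

/-- An element `∑_{i=0}^n λ_i F^i` of `R[F;σ]` is nilpotent iff all
coefficients `λ_0, …, λ_n` are nilpotent. -/
theorem skew_nilpotent_iff {R : Type*} [CommRing R] (p : ℕ) (hp : p.Prime)
    [CharP R p] (n : ℕ) (P : ℕ → R) (hP : ∀ i, n < i → P i = 0) :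
    (∃ m, skewPow p P m = 0) ↔ ∀ i ≤ n, IsNilpotent (P i) := by
  classical
  have hp0 : 0 < p := hp.pos
  constructor
  · rintro ⟨m, hm⟩ i hin
    rw [nilpotent_iff_mem_prime]
    intro J hJ
    haveI := hJ
    set f := Ideal.Quotient.mk J with hf
    by_contra hmem
    set Q : ℕ → R ⧸ J := f ∘ P with hQ
    have hQi : Q i ≠ 0 := fun h0 => hmem (Ideal.Quotient.eq_zero_iff_mem.mp h0)
    set d : ℕ := Nat.findGreatest (fun j => Q j ≠ 0) n with hd
    have hQd : Q d ≠ 0 := Nat.findGreatest_spec (P := fun j => Q j ≠ 0) hin hQi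
    have hdn : d ≤ n := Nat.findGreatest_le n
    have htop : ∀ j, d < j → Q j = 0 := by
      intro j hj
      rcases le_or_gt j n with hjn | hjn
      · by_contra hne
        exact (Nat.findGreatest_is_greatest (P := fun j => Q j ≠ 0) hj hjn) hne
      · simp [hQ, hP j hjn]
    have hlead := skewPow_leading p hp0 d Q hQd htop m
    apply hlead
    rw [← skewPow_map f p P m (m * d), hm]
    simp
  · intro h
    set s : Finset R := (Finset.range (n + 1)).image P with hs
    obtain ⟨m, hm⟩ := span_nilpotent s (by
      intro x hx
      simp only [hs, Finset.mem_image, Finset.mem_range] at hx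
      obtain ⟨i, hi, rfl⟩ := hx
      exact h i (by omega))
    refine ⟨m, ?_⟩
    funext k
    have hmem : skewPow p P m k ∈ (Ideal.span (s : Set R)) ^ m :=
      skewPow_mem_pow p hp0 P _ (fun i => by
        rcases le_or_gt i n with hi | hi
        · exact Ideal.subset_span (by simp [hs]; exact ⟨i, by omega, rfl⟩)
        · rw [hP i hi]; exact Ideal.zero_mem _) m k
    rw [hm] at hmem
    simpa using hmem
end

section
/- Let R be a commutative ring of characteristic p > 0. An element P = ∑_{i=0}^n λ_i F^i of the skew polynomial ring R[F;σ] is invertible if and only if λ_0 is a unit of R and λ_1, ..., λ_n are nilpotent. -/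
/-!
If `P Q = 1`, reduce modulo a prime ideal `J`: for the last coefficients `λ_a`, `μ_b` of `P` and
`Q` outside `J`, the coefficient of `F^(a+b)` in `P Q` is `λ_a μ_b^(p^a) ∉ J`, so `a + b = 0`.
Hence all higher coefficients of both `P` and `Q` lie in every prime, i.e. are nilpotent.

Conversely, the coefficients of a right inverse `Q` of `P` can be solved for recursively since
`λ_0` is a unit. If `I` is the ideal spanned by `λ_1, …, λ_n`, then `μ_j ∈ I^t` for `j > n t`, and
`I^M = 0` for some `M` because `I` is finitely generated and nil; so `Q` is a polynomial. By the
first part `Q` is of the same shape as `P`, so it has a right inverse too, which must be `P`.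
-/

open Finset

section SkewPolynomial

variable {R : Type*} [CommRing R] {p : ℕ}

lemma skewMul_one (hp : p ≠ 0) (P : ℕ → R) : skewMul p P (skewOne R) = P := by
  funext k
  rw [skewMul, sum_eq_single k]
  · simp [skewOne]
  · intro i hi hik
    have : k - i ≠ 0 := by rw [mem_range] at hi; omega
    simp [skewOne, this, zero_pow (pow_ne_zero i hp)]
  · simp

lemma one_skewMul (P : ℕ → R) : skewMul p (skewOne R) P = P := by
  funext k
  rw [skewMul, sum_eq_single 0]
  · simp [skewOne]
  · intro i _ hi
    simp [skewOne, hi]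
  · simp

/-- Associativity rests on the additivity of the iterated Frobenius `x ↦ x ^ p ^ i`. -/
lemma skewMul_assoc [ExpChar R p] (A B C : ℕ → R) :
    skewMul p (skewMul p A B) C = skewMul p A (skewMul p B C) := by
  funext k
  simp only [skewMul, sum_mul, sum_pow_char_pow, mul_sum, mul_pow, ← pow_mul, ← pow_add]
  rw [sum_sigma', sum_sigma']
  apply sum_nbij' (fun x => ⟨x.2, x.1 - x.2⟩) (fun x => ⟨x.1 + x.2, x.1⟩)
  · intro x hx
    simp only [mem_sigma, mem_range] at *
    omega
  · intro x hx
    simp only [mem_sigma, mem_range] at *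
    omega
  · intro x hx
    simp only [mem_sigma, mem_range] at hx
    ext <;> simp; omega
  · intro x _
    ext <;> simp
  · rintro ⟨j, i⟩ hx
    simp only [mem_sigma, mem_range] at hx
    simp only [show k - i - (j - i) = k - j by omega, show j - i + i = j by omega,
      mul_assoc]

lemma mul_eq_one_of_skewMul_eq_skewOne {P Q : ℕ → R} (h : skewMul p P Q = skewOne R) :
    P 0 * Q 0 = 1 := by
  simpa [skewMul, skewOne] using congrFun h 0

lemma exists_notMem_forall_lt_mem {f : ℕ → R} {m : ℕ} (hf : ∀ j, m < j → f j = 0)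
    {J : Ideal R} {i : ℕ} (hi : f i ∉ J) : ∃ a, f a ∉ J ∧ ∀ l, a < l → f l ∈ J := by
  classical
  have him : i ≤ m := by
    by_contra! him
    exact hi (hf i him ▸ J.zero_mem)
  refine ⟨_, Nat.findGreatest_spec (P := fun a => f a ∉ J) him hi, fun l hl => ?_⟩
  by_cases hlm : l ≤ m
  · simpa using Nat.findGreatest_is_greatest hl hlm
  · simp [hf l (by omega)]

lemma skewMul_add_sub_mem (hp : p ≠ 0) {P Q : ℕ → R} {J : Ideal R} {a b : ℕ}
    (hPJ : ∀ l, a < l → P l ∈ J) (hQJ : ∀ l, b < l → Q l ∈ J) :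
    skewMul p P Q (a + b) - P a * Q b ^ p ^ a ∈ J := by
  have ha : a ∈ range (a + b + 1) := mem_range.2 (by omega)
  rw [skewMul, ← add_sum_erase _ _ ha, Nat.add_sub_cancel_left, add_sub_cancel_left]
  refine J.sum_mem fun l hl => ?_
  obtain ⟨hla, hl⟩ := mem_erase.1 hl
  rcases lt_or_gt_of_ne hla with hla | hla
  · exact J.mul_mem_left _ (J.pow_mem_of_mem (hQJ _ (by omega)) _ (by positivity))
  · exact J.mul_mem_right _ (hPJ l hla)

lemma isNilpotent_of_skewMul_eq_skewOne (hp : p ≠ 0) {n m : ℕ} {P Q : ℕ → R}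
    (hP : ∀ j, n < j → P j = 0) (hQ : ∀ j, m < j → Q j = 0) (h : skewMul p P Q = skewOne R)
    {i : ℕ} (hi : 1 ≤ i) : IsNilpotent (P i) ∧ IsNilpotent (Q i) := by
  simp only [nilpotent_iff_mem_prime, ← forall_and]
  intro J hJ
  have h0 := mul_eq_one_of_skewMul_eq_skewOne h
  have hP0 : P 0 ∉ J := fun hJ0 => hJ.ne_top (J.eq_top_of_isUnit_mem hJ0 (.of_mul_eq_one _ h0))
  have hQ0 : Q 0 ∉ J := fun hJ0 =>
    hJ.ne_top (J.eq_top_of_isUnit_mem hJ0 (.of_mul_eq_one _ (mul_comm (P 0) _ ▸ h0)))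
  obtain ⟨a, haJ, hPJ⟩ := exists_notMem_forall_lt_mem hP hP0
  obtain ⟨b, hbJ, hQJ⟩ := exists_notMem_forall_lt_mem hQ hQ0
  have hab : a + b = 0 := by
    by_contra hab
    have hmem := skewMul_add_sub_mem hp hPJ hQJ
    rw [h, skewOne, if_neg hab, zero_sub, neg_mem_iff] at hmem
    rcases hJ.mem_or_mem hmem with hmem | hmem
    · exact haJ hmem
    · exact hbJ (hJ.mem_of_pow_mem _ hmem)
  exact ⟨hPJ i (by omega), hQJ i (by omega)⟩

/-- The right inverse of `P` when `P 0 * v = 1`: the coefficient of `F^(k+1)` in `P Q = 1`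
reads `P 0 * Q (k + 1) + ∑_{i ≤ k} P (i + 1) * Q (k - i) ^ p ^ (i + 1) = 0`. -/
def skewRightInv (p : ℕ) (P : ℕ → R) (v : R) : ℕ → R
  | 0 => v
  | k + 1 => -v * ∑ i ∈ range (k + 1), P (i + 1) * skewRightInv p P v (k - i) ^ p ^ (i + 1)
  decreasing_by omega

lemma skewMul_skewRightInv {P : ℕ → R} {v : R} (hv : P 0 * v = 1) :
    skewMul p P (skewRightInv p P v) = skewOne R := by
  funext k
  cases k with
  | zero => simpa [skewMul, skewOne, skewRightInv] using hv
  | succ k =>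
    rw [skewMul, sum_range_succ', skewOne, if_neg k.succ_ne_zero]
    simp only [Nat.add_sub_add_right, Nat.sub_zero, pow_zero, pow_one]
    rw [skewRightInv]
    linear_combination
      (-∑ i ∈ range (k + 1), P (i + 1) * skewRightInv p P v (k - i) ^ p ^ (i + 1)) * hv

lemma skewRightInv_mem_pow (hp : p ≠ 0) {n : ℕ} {P : ℕ → R} (hP : ∀ i, n < i → P i = 0)
    {I : Ideal R} (hI : ∀ i, 1 ≤ i → i ≤ n → P i ∈ I) (v : R) (t : ℕ) :
    ∀ j, n * t < j → skewRightInv p P v j ∈ I ^ t := by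
  induction t with
  | zero => simp
  | succ t ih =>
    rintro (_ | k) hk
    · omega
    rw [skewRightInv, pow_succ']
    refine Ideal.mul_mem_left _ _ (Ideal.sum_mem _ fun i _ => ?_)
    by_cases hin : n < i + 1
    · simp [hP _ hin]
    · exact Ideal.mul_mem_mul (hI _ (by omega) (by omega))
        (Ideal.pow_mem_of_mem _ (ih _ (by rw [Nat.mul_succ] at hk; omega)) _ (by positivity))

lemma exists_skewMul_eq_skewOne (hp : p ≠ 0) {n : ℕ} {P : ℕ → R} (hP : ∀ i, n < i → P i = 0)
    (h0 : IsUnit (P 0)) (hnil : ∀ i, 1 ≤ i → i ≤ n → IsNilpotent (P i)) :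
    ∃ Q : ℕ → R, (∃ m, ∀ j, m < j → Q j = 0) ∧ skewMul p P Q = skewOne R := by
  set I : Ideal R := Ideal.span (P '' Set.Icc 1 n)
  have hI : ∀ i, 1 ≤ i → i ≤ n → P i ∈ I := fun i h1 h2 =>
    Ideal.subset_span ⟨i, ⟨h1, h2⟩, rfl⟩
  have hInil : I ≤ (⊥ : Ideal R).radical := by
    rw [Ideal.span_le]
    rintro _ ⟨i, ⟨h1, h2⟩, rfl⟩
    exact hnil i h1 h2
  obtain ⟨M, hM⟩ := Ideal.exists_pow_le_of_le_radical_of_fg hInil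
    (Submodule.fg_span ((Set.finite_Icc 1 n).image P))
  refine ⟨skewRightInv p P ↑h0.unit⁻¹, ⟨n * M, fun j hj => ?_⟩,
    skewMul_skewRightInv h0.mul_val_inv⟩
  simpa using hM (skewRightInv_mem_pow hp hP hI _ M j hj)

end SkewPolynomial

/-- An element `P = ∑_{i=0}^n λ_i F^i` of `R[F;σ]` is invertible iff `λ_0` is a
unit and `λ_1, …, λ_n` are nilpotent. -/
theorem skew_isUnit_iff {R : Type*} [CommRing R] (p : ℕ) (hp : p.Prime)
    [CharP R p] (n : ℕ) (P : ℕ → R) (hP : ∀ i, n < i → P i = 0) :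
    (∃ Q : ℕ → R, (∃ m, ∀ j, m < j → Q j = 0) ∧
        skewMul p P Q = skewOne R ∧ skewMul p Q P = skewOne R) ↔
      IsUnit (P 0) ∧ ∀ i, 1 ≤ i → i ≤ n → IsNilpotent (P i) := by
  have : ExpChar R p := ExpChar.prime hp
  constructor
  · rintro ⟨Q, ⟨m, hQ⟩, hPQ, -⟩
    exact ⟨.of_mul_eq_one _ (mul_eq_one_of_skewMul_eq_skewOne hPQ),
      fun i hi _ => (isNilpotent_of_skewMul_eq_skewOne hp.ne_zero hP hQ hPQ hi).1⟩
  · rintro ⟨h0, hnil⟩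
    obtain ⟨Q, ⟨m, hQ⟩, hPQ⟩ := exists_skewMul_eq_skewOne hp.ne_zero hP h0 hnil
    have hQ0 : IsUnit (Q 0) :=
      .of_mul_eq_one _ (mul_comm (P 0) _ ▸ mul_eq_one_of_skewMul_eq_skewOne hPQ)
    obtain ⟨Q', -, hQQ'⟩ := exists_skewMul_eq_skewOne hp.ne_zero hQ hQ0
      fun i hi _ => (isNilpotent_of_skewMul_eq_skewOne hp.ne_zero hP hQ hPQ hi).2
    have hQ'P : Q' = P := by
      rw [← one_skewMul (p := p) Q', ← hPQ, skewMul_assoc, hQQ', skewMul_one hp.ne_zero]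
    exact ⟨Q, ⟨m, hQ⟩, hPQ, hQ'P ▸ hQQ'⟩
end

section
/- Let R be a commutative ring of characteristic p > 0. The map sending ∑_{i=0}^n λ_i F^i to the upper triangular matrix (λ_{s-r}^{p^r})_{0 ≤ r ≤ s ≤ d-1} (with entries λ_j := 0 for j > n) is a ring homomorphism from R[F;σ] to the ring of d × d matrices over R, for each d ≥ 1. -/
/-- The matrix representation `∑ λ_i F^i ↦ (λ_{s-r}^{p^r})_{0 ≤ r ≤ s ≤ d-1}`. -/
def skewToMatrix {R : Type*} [CommRing R] (p d : ℕ) (P : ℕ → R) :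
    Matrix (Fin d) (Fin d) R :=
  fun r s => if (r : ℕ) ≤ (s : ℕ) then (P ((s : ℕ) - (r : ℕ))) ^ (p ^ (r : ℕ)) else 0

/-- The map `∑ λ_i F^i ↦ (λ_{s-r}^{p^r})` into upper triangular `d×d` matrices
is a ring homomorphism: it preserves one, addition, and (skew) multiplication. -/
theorem skewToMatrix_ringHom {R : Type*} [CommRing R] (p : ℕ) (hp : p.Prime)
    [CharP R p] (d : ℕ) (hd : 1 ≤ d) :
    skewToMatrix p d (skewOne R) = 1 ∧
    (∀ P Q : ℕ → R,
      skewToMatrix p d (fun k => P k + Q k) = skewToMatrix p d P + skewToMatrix p d Q) ∧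
    (∀ P Q : ℕ → R,
      skewToMatrix p d (skewMul p P Q) = skewToMatrix p d P * skewToMatrix p d Q) := by
  haveI := Fact.mk hp
  haveI : ExpChar R p := ExpChar.prime hp
  refine ⟨?_, ?_, ?_⟩
  · ext r s
    simp only [skewToMatrix, skewOne, Matrix.one_apply]
    rcases lt_trichotomy (r : ℕ) (s : ℕ) with h | h | h
    · rw [if_pos h.le, if_neg (by omega : (s : ℕ) - r ≠ 0),
        if_neg (fun hrs => by simp [hrs] at h), zero_pow (pow_ne_zero _ hp.ne_zero)]
    · rw [if_pos h.le, if_pos (by omega), if_pos (Fin.ext h), one_pow]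
    · rw [if_neg (by omega), if_neg (fun hrs => by simp [hrs] at h)]
  · intro P Q
    ext r s
    simp only [skewToMatrix, Matrix.add_apply]
    split
    · rw [add_pow_char_pow]
    · rw [add_zero]
  · intro P Q
    ext r s
    rw [Matrix.mul_apply]
    simp only [skewToMatrix]
    by_cases h : (r : ℕ) ≤ (s : ℕ)
    · rw [if_pos h, skewMul]
      rw [← iterateFrobenius_def (R := R) p (r : ℕ), map_sum]
      simp only [map_mul, iterateFrobenius_def, ← pow_mul, ← pow_add]
      -- RHS : collapse the ites
      have hrhs : (∑ t : Fin d,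
          (if (r : ℕ) ≤ (t : ℕ) then (P ((t : ℕ) - r)) ^ p ^ (r : ℕ) else 0) *
          (if (t : ℕ) ≤ (s : ℕ) then (Q ((s : ℕ) - t)) ^ p ^ (t : ℕ) else 0)) =
          ∑ t ∈ Finset.Icc r s,
            (P ((t : ℕ) - r)) ^ p ^ (r : ℕ) * (Q ((s : ℕ) - t)) ^ p ^ (t : ℕ) := by
        rw [← Finset.sum_subset (Finset.subset_univ (Finset.Icc r s))]
        · apply Finset.sum_congr rfl
          intro t ht
          rw [Finset.mem_Icc] at ht
          rw [if_pos (Fin.le_def.mp ht.1), if_pos (Fin.le_def.mp ht.2)]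
        · intro t _ ht
          rw [Finset.mem_Icc] at ht
          rcases Decidable.not_and_iff_or_not.mp ht with h' | h'
          · rw [if_neg (fun hle => h' (Fin.le_def.mpr hle)), zero_mul]
          · rw [if_neg (fun hle => h' (Fin.le_def.mpr hle)), mul_zero]
      rw [hrhs]
      refine Finset.sum_bij' (fun a ha => (⟨(r : ℕ) + a, ?_⟩ : Fin d))
        (fun t _ => (t : ℕ) - (r : ℕ)) ?_ ?_ ?_ ?_ ?_
      · rw [Finset.mem_range] at ha
        omega
      · intro a ha
        rw [Finset.mem_range] at ha
        rw [Finset.mem_Icc]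
        constructor <;> rw [Fin.le_def] <;> simp <;> omega
      · intro t ht
        rw [Finset.mem_Icc] at ht
        have h1 := Fin.le_def.mp ht.1
        have h2 := Fin.le_def.mp ht.2
        simp only [Finset.mem_range]
        omega
      · intro a ha
        simp
      · intro t ht
        rw [Finset.mem_Icc] at ht
        have h1 := Fin.le_def.mp ht.1
        ext
        simp
        omega
      · intro a ha
        rw [Finset.mem_range] at ha
        simp only [Fin.val_mk, Nat.add_sub_cancel_left, ← Nat.sub_sub, Nat.add_comm a (r : ℕ)]
    · rw [if_neg h]
      symm
      apply Finset.sum_eq_zero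
      intro t _
      by_cases h1 : (r : ℕ) ≤ (t : ℕ)
      · rw [if_pos h1, if_neg (show ¬(t : ℕ) ≤ (s : ℕ) by omega), mul_zero]
      · rw [if_neg h1, zero_mul]
end

section
/- Let p be a prime and n ≥ 0. The numerical semigroup Γ_{p,n} generated by p^n and p^n - p^j for 0 ≤ j ≤ n-1 has conductor c_{p,n} = n·p^{n+1} - (n+2)·p^n + 2, i.e., every integer ≥ c_{p,n} lies in Γ_{p,n}, and c_{p,n} - 1 does not lie in Γ_{p,n} when c_{p,n} ≥ 1. -/
/-!
An element of `Γ_{p,n}` is `a p^n - t`, where `a` is the number of generators used and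
`t = ∑_{j<n} f_j p^j` is a sum of at most `a` powers `p^j`, `j < n`. Base-`p` digits write any
`t < p^n` with at most `n(p-1)` such powers, and with at most `n(p-1) - 1` unless `t = p^n - 1`;
rounding `m ≥ c` up to a multiple of `p^n` then puts `m` in `Γ_{p,n}`. Conversely,
`c - 1 = (n(p-1) - 2) p^n + 1` would force `t = b p^n - 1`, and carrying shows that this costs at
least `bp + n(p-1) - p` powers, more than the `n(p-1) - 2 + b` available.
-/

/-- Generators `p^n` and `p^n - p^j` (`0 ≤ j ≤ n-1`) of the numerical
semigroup `Γ_{p,n}`. -/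
def gammaGen (p n : ℕ) : Set ℕ :=
  {m | m = p ^ n ∨ ∃ j < n, m = p ^ n - p ^ j}

/-- The numerical semigroup `Γ_{p,n} = ⟨p^n, p^n - p^{n-1}, …, p^n - 1⟩`. -/
def Gamma (p n : ℕ) : AddSubmonoid ℕ := AddSubmonoid.closure (gammaGen p n)

open Finset

variable {p : ℕ}

lemma sum_range_div_pow_mod_mul_pow (t n : ℕ) :
    ∑ j ∈ range n, t / p ^ j % p * p ^ j = t % p ^ n := by
  induction n with
  | zero => simp [Nat.mod_one]
  | succ n ih => rw [sum_range_succ, ih, Nat.mod_pow_succ, mul_comm]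

lemma sum_range_div_pow_mod_le (hp : 0 < p) (t n : ℕ) :
    ∑ j ∈ range n, t / p ^ j % p ≤ n * (p - 1) := by
  simpa using sum_le_sum (s := range n) fun j _ =>
    Nat.le_sub_one_of_lt (Nat.mod_lt (t / p ^ j) hp)

lemma sum_range_div_pow_mod_lt (hp : 0 < p) {t n : ℕ} (ht : t % p ^ n + 1 < p ^ n) :
    ∑ j ∈ range n, t / p ^ j % p < n * (p - 1) := by
  have hle (j : ℕ) : t / p ^ j % p ≤ p - 1 := Nat.le_sub_one_of_lt (Nat.mod_lt _ hp)
  -- if every digit were `p - 1`, then `t % p ^ n` would be `p ^ n - 1`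
  have hlt : ∃ j ∈ range n, t / p ^ j % p < p - 1 := by
    by_contra! h
    have hgeom := geom_sum_mul_add (p - 1) n
    rw [Nat.sub_one_add_one hp.ne'] at hgeom
    rw [← sum_range_div_pow_mod_mul_pow,
      sum_congr rfl fun j hj => by rw [(hle j).antisymm (h j hj)], ← mul_sum, mul_comm] at ht
    omega
  simpa using sum_lt_sum (fun j _ => hle j) hlt

lemma add_le_mul_add_one {a b : ℕ} (ha : 0 < a) (hb : 0 < b) : a + b ≤ a * b + 1 := by
  nlinarith

lemma le_sum_add_of_sum_mul_pow_add_one_eq (hp : 0 < p) (f : ℕ → ℕ) {n b : ℕ}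
    (h : ∑ j ∈ range n, f j * p ^ j + 1 = b * p ^ n) :
    b * p + n * (p - 1) ≤ ∑ j ∈ range n, f j + p := by
  induction n generalizing b with
  | zero =>
    obtain rfl : b = 1 := by simpa [eq_comm] using h
    simp
  | succ n ih =>
    have h' : (∑ j ∈ range n, f j * p ^ j + 1) + f n * p ^ n = b * p * p ^ n := by
      rw [mul_assoc, ← pow_succ', ← h, sum_range_succ]; ring
    set d := b * p - f n
    have hrest : ∑ j ∈ range n, f j * p ^ j + 1 = d * p ^ n := by
      rw [Nat.sub_mul]; omega
    have hd : 0 < d := Nat.pos_of_ne_zero fun h0 => by simp [h0] at hrest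
    have := ih hrest
    have := add_le_mul_add_one hd hp
    rw [sum_range_succ, Nat.succ_mul]
    omega

lemma mem_Gamma_of_one_mem_gammaGen {n : ℕ} (h : 1 ∈ gammaGen p n) (m : ℕ) :
    m ∈ Gamma p n := by
  have h1 : 1 ∈ Gamma p n := AddSubmonoid.subset_closure h
  simpa using nsmul_mem h1 m

lemma mem_Gamma_iff (hp : 0 < p) {n m : ℕ} :
    m ∈ Gamma p n ↔ ∃ a, ∃ f : ℕ → ℕ,
      m + ∑ j ∈ range n, f j * p ^ j = a * p ^ n ∧ ∑ j ∈ range n, f j ≤ a := by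
  have hpow {j : ℕ} (hj : j ∈ range n) : p ^ j ≤ p ^ n :=
    Nat.pow_le_pow_right hp (mem_range.1 hj).le
  constructor
  · intro hm
    induction hm using AddSubmonoid.closure_induction with
    | mem x hx =>
      obtain rfl | ⟨i, hi, rfl⟩ := hx
      · exact ⟨1, 0, by simp, by simp⟩
      · refine ⟨1, fun j => if j = i then 1 else 0, ?_, by simp [hi]⟩
        simp [ite_mul, hi, Nat.sub_add_cancel (hpow (mem_range.2 hi))]
    | zero => exact ⟨0, 0, by simp, by simp⟩
    | add x y _ _ hx hy =>
      obtain ⟨a, f, hf, hfa⟩ := hx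
      obtain ⟨b, g, hg, hgb⟩ := hy
      refine ⟨a + b, f + g, ?_, by simpa [sum_add_distrib] using add_le_add hfa hgb⟩
      simp only [Pi.add_apply, add_mul, sum_add_distrib]
      linarith
  · rintro ⟨a, f, hm, hfa⟩
    have hsplit : ∑ j ∈ range n, f j * (p ^ n - p ^ j) + ∑ j ∈ range n, f j * p ^ j
        = (∑ j ∈ range n, f j) * p ^ n := by
      rw [← sum_add_distrib, sum_mul]
      exact sum_congr rfl fun j hj => by rw [← mul_add, Nat.sub_add_cancel (hpow hj)]
    have hm' :
        m = (a - ∑ j ∈ range n, f j) * p ^ n + ∑ j ∈ range n, f j * (p ^ n - p ^ j) := by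
      have := Nat.mul_le_mul_right (p ^ n) hfa
      rw [Nat.sub_mul]
      omega
    have hgen {x : ℕ} (hx : x ∈ gammaGen p n) (k : ℕ) : k * x ∈ Gamma p n :=
      smul_eq_mul k x ▸ nsmul_mem (AddSubmonoid.subset_closure hx) k
    rw [hm']
    exact add_mem (hgen (Or.inl rfl) _)
      (sum_mem fun j hj => hgen (Or.inr ⟨j, mem_range.1 hj, rfl⟩) _)

/-- The paper's `c_{p,n} = n p^{n+1} - (n+2) p^n + 2`; the truncated subtraction is faithful
only when `2 ≤ n (p - 1)`. -/
def gammaConductor (p n : ℕ) : ℕ := (n * (p - 1) - 2) * p ^ n + 2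

lemma pos_of_two_le_mul_sub_one {n : ℕ} (hB : 2 ≤ n * (p - 1)) : 0 < p :=
  Nat.pos_of_ne_zero (by rintro rfl; simp at hB)

lemma natCast_gammaConductor {n : ℕ} (hB : 2 ≤ n * (p - 1)) :
    (gammaConductor p n : ℤ) = n * p ^ (n + 1) - (n + 2) * p ^ n + 2 := by
  have hp : 1 ≤ p := pos_of_two_le_mul_sub_one hB
  simp only [gammaConductor]
  push_cast [Nat.cast_sub hB, Nat.cast_sub hp]
  ring

lemma mem_Gamma_of_gammaConductor_le {n m : ℕ} (hB : 2 ≤ n * (p - 1))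
    (hm : gammaConductor p n ≤ m) :
    m ∈ Gamma p n := by
  have hp : 0 < p := pos_of_two_le_mul_sub_one hB
  have hq : 0 < p ^ n := pow_pos hp n
  -- round `m` up to the multiple `a * p ^ n`, `a = ⌈m / p ^ n⌉`
  obtain ⟨a, t, hmt, htq⟩ : ∃ a t, m + t = a * p ^ n ∧ t < p ^ n := by
    obtain ⟨r, hr, a, ha⟩ : ∃ r < p ^ n, ∃ a, m + p ^ n - 1 = a * p ^ n + r :=
      ⟨_, Nat.mod_lt _ hq, _, (Nat.div_add_mod' _ _).symm⟩
    exact ⟨a, p ^ n - 1 - r, by omega, by omega⟩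
  have hrep := sum_range_div_pow_mod_mul_pow (p := p) t n
  rw [Nat.mod_eq_of_lt htq] at hrep
  refine (mem_Gamma_iff hp).2 ⟨a, fun j => t / p ^ j % p, by rw [hrep, hmt], ?_⟩
  show ∑ j ∈ range n, t / p ^ j % p ≤ a
  unfold gammaConductor at hm
  have ha : n * (p - 1) - 2 < a := Nat.lt_of_mul_lt_mul_right (a := p ^ n) (by omega)
  rcases le_or_gt (n * (p - 1)) a with hBa | haB
  · exact (sum_range_div_pow_mod_le hp t n).trans hBa
  · obtain rfl : a = n * (p - 1) - 1 := by omega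
    have hsucc : (n * (p - 1) - 1) * p ^ n = (n * (p - 1) - 2) * p ^ n + p ^ n := by
      rw [← Nat.succ_mul]; congr 1; omega
    have := sum_range_div_pow_mod_lt hp (t := t) (by rw [Nat.mod_eq_of_lt htq]; omega)
    omega

lemma gammaConductor_sub_one_notMem_Gamma {n : ℕ} (hB : 2 ≤ n * (p - 1)) :
    gammaConductor p n - 1 ∉ Gamma p n := by
  have hp : 0 < p := pos_of_two_le_mul_sub_one hB
  rw [gammaConductor, Nat.add_sub_assoc one_le_two, mem_Gamma_iff hp]
  rintro ⟨a, f, hf, hfa⟩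
  set b := a - (n * (p - 1) - 2)
  have hb : ∑ j ∈ range n, f j * p ^ j + 1 = b * p ^ n := by
    rw [Nat.sub_mul]; omega
  have hb0 : 0 < b := Nat.pos_of_ne_zero fun h0 => by simp [h0] at hb
  have := le_sum_add_of_sum_mul_pow_add_one_eq hp f hb
  have := add_le_mul_add_one hb0 hp
  omega

/-- `Γ_{p,n}` has conductor `c = n·p^{n+1} - (n+2)·p^n + 2`: every integer
`≥ c` lies in `Γ_{p,n}`, and `c - 1` does not when `c ≥ 1`. -/
theorem Gamma_conductor (p n : ℕ) (hp : p.Prime) (c : ℕ)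
    (hc : (c : ℤ) = n * p ^ (n + 1) - (n + 2) * p ^ n + 2) :
    (∀ m, c ≤ m → m ∈ Gamma p n) ∧ (1 ≤ c → c - 1 ∉ Gamma p n) := by
  obtain hB | hB := le_or_gt 2 (n * (p - 1))
  · obtain rfl : c = gammaConductor p n := by
      exact_mod_cast hc.trans (natCast_gammaConductor hB).symm
    exact ⟨fun m => mem_Gamma_of_gammaConductor_le hB,
      fun _ => gammaConductor_sub_one_notMem_Gamma hB⟩
  · -- in the remaining cases `1` is a generator and `c = 0`
    obtain rfl | ⟨rfl, rfl⟩ : n = 0 ∨ n = 1 ∧ p = 2 := by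
      have := hp.two_le
      rcases n with _ | n
      · exact .inl rfl
      · have := Nat.le_mul_of_pos_right (n + 1) (by omega : 0 < p - 1)
        have := Nat.le_mul_of_pos_left (p - 1) (by omega : 0 < n + 1)
        exact .inr ⟨by omega, by omega⟩
    · norm_num at hc
      exact ⟨fun m _ => mem_Gamma_of_one_mem_gammaGen (.inl (pow_zero p).symm) m, by omega⟩
    · norm_num at hc
      exact ⟨fun m _ => mem_Gamma_of_one_mem_gammaGen (.inr ⟨0, one_pos, rfl⟩) m, by omega⟩
end

section
/- Let p be a prime and n ≥ 0. The numerical semigroup Γ_{p,n} = ⟨p^n, p^n - p^{n-1}, ..., p^n - 1⟩ is symmetric: an integer m with 0 ≤ m ≤ c - 1 belongs to Γ_{p,n} if and only if c - 1 - m does not, where c = n·p^{n+1} - (n+2)·p^n + 2 is the conductor. Consequently the number of gaps (genus) equals c/2. -/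
theorem Int.exists_eq_mul_add_mul_of_isCoprime {a p : ℤ} (hpa : IsCoprime a p) (hp : 0 < p)
    (z : ℤ) : ∃ x t, 0 ≤ t ∧ t < p ∧ z = p * x + t * a := by
  obtain ⟨u, v, huv⟩ := hpa
  have hdiv := Int.mul_ediv_add_emod (z * u) p
  exact ⟨z * u / p * a + z * v, z * u % p, Int.emod_nonneg _ hp.ne', Int.emod_lt_of_pos _ hp,
    by linear_combination (-z) * huv - a * hdiv⟩

theorem Int.exists_eq_add_mul_of_mul_add_mul_eq {a p x x' t t' : ℤ} (hpa : IsCoprime a p)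
    (hp : 0 < p) (ht : t < p) (ht' : 0 ≤ t') (h : p * x + t * a = p * x' + t' * a) :
    ∃ q, 0 ≤ q ∧ x = x' + q * a := by
  obtain ⟨q, hq⟩ : p ∣ t' - t :=
    hpa.symm.dvd_of_dvd_mul_right ⟨x - x', by linear_combination -h⟩
  refine ⟨q, by nlinarith, mul_left_cancel₀ hp.ne' ?_⟩
  linear_combination h + a * hq

namespace AddSubmonoid

section Glue

variable {M : Type*} [NonUnitalNonAssocSemiring M]

def glue (S : AddSubmonoid M) (p a : M) : AddSubmonoid M :=
  S.map (AddMonoidHom.mulLeft p) ⊔ closure {a}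

theorem mem_glue_iff {S : AddSubmonoid M} {p a z : M} :
    z ∈ S.glue p a ↔ ∃ x ∈ S, ∃ t : ℕ, p * x + t • a = z := by
  simp only [glue, mem_sup, mem_map, mem_closure_singleton, AddMonoidHom.coe_mulLeft]
  constructor
  · rintro ⟨_, ⟨x, hx, rfl⟩, _, ⟨t, rfl⟩, rfl⟩
    exact ⟨x, hx, t, rfl⟩
  · rintro ⟨x, hx, t, rfl⟩
    exact ⟨_, ⟨x, hx, rfl⟩, _, ⟨t, rfl⟩, rfl⟩

end Glue

theorem map_natCast_glue (S : AddSubmonoid ℕ) (p a : ℕ) :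
    (S.glue p a).map (Nat.castAddMonoidHom ℤ) = (S.map (Nat.castAddMonoidHom ℤ)).glue p a := by
  have hcomm : (Nat.castAddMonoidHom ℤ).comp (AddMonoidHom.mulLeft p) =
      (AddMonoidHom.mulLeft (p : ℤ)).comp (Nat.castAddMonoidHom ℤ) := by
    ext; simp
  rw [glue, glue, map_sup, map_map, hcomm, ← map_map, AddMonoidHom.map_mclosure,
    Set.image_singleton]
  rfl

/-- Symmetry with Frobenius number `F`, imposed on all of `ℤ`: it also says that every integer
above `F` lies in `S` and no negative one does. -/
def IsSymmetricAbout (S : AddSubmonoid ℤ) (F : ℤ) : Prop :=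
  ∀ z, z ∈ S ↔ F - z ∉ S

section Int

variable {S : AddSubmonoid ℤ} {F p a : ℤ}

theorem mul_add_mul_mem_glue_iff (ha : a ∈ S) (hp : 0 < p) (hpa : IsCoprime a p) {x t : ℤ}
    (ht₀ : 0 ≤ t) (ht : t < p) : p * x + t * a ∈ S.glue p a ↔ x ∈ S := by
  rw [mem_glue_iff]
  constructor
  · rintro ⟨x', hx', t', h⟩
    rw [nsmul_eq_mul] at h
    obtain ⟨q, hq, rfl⟩ :=
      Int.exists_eq_add_mul_of_mul_add_mul_eq hpa hp ht t'.cast_nonneg h.symm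
    lift q to ℕ using hq
    simpa [nsmul_eq_mul] using S.add_mem hx' (S.nsmul_mem ha q)
  · intro hx
    lift t to ℕ using ht₀
    exact ⟨x, hx, t, by rw [nsmul_eq_mul]⟩

theorem IsSymmetricAbout.glue (hS : S.IsSymmetricAbout F) (ha : a ∈ S) (hp : 0 < p)
    (hpa : IsCoprime a p) : (S.glue p a).IsSymmetricAbout (p * F + (p - 1) * a) := by
  intro z
  obtain ⟨x, t, ht₀, ht, rfl⟩ := Int.exists_eq_mul_add_mul_of_isCoprime hpa hp z
  have hdual : p * F + (p - 1) * a - (p * x + t * a) = p * (F - x) + (p - 1 - t) * a := by ring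
  rw [hdual, mul_add_mul_mem_glue_iff ha hp hpa ht₀ ht,
    mul_add_mul_mem_glue_iff ha hp hpa (by omega) (by omega)]
  exact hS x

end Int

section Nat

variable {S : AddSubmonoid ℕ} {c : ℕ}

theorem natCast_mem_map_natCast {m : ℕ} :
    (m : ℤ) ∈ S.map (Nat.castAddMonoidHom ℤ) ↔ m ∈ S :=
  mem_map_iff_mem (f := Nat.castAddMonoidHom ℤ) Nat.cast_injective

theorem notMem_map_natCast_of_neg {z : ℤ} (hz : z < 0) :
    z ∉ S.map (Nat.castAddMonoidHom ℤ) := by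
  rintro ⟨m, -, rfl⟩
  exact (m.cast_nonneg.trans_lt hz).false

theorem IsSymmetricAbout.mem_of_le
    (hS : (S.map (Nat.castAddMonoidHom ℤ)).IsSymmetricAbout (c - 1)) {m : ℕ} (hm : c ≤ m) :
    m ∈ S :=
  natCast_mem_map_natCast.mp <| (hS m).mpr <| notMem_map_natCast_of_neg (by omega)

theorem IsSymmetricAbout.mem_iff_sub_notMem
    (hS : (S.map (Nat.castAddMonoidHom ℤ)).IsSymmetricAbout (c - 1)) {m : ℕ} (hm : m < c) :
    m ∈ S ↔ c - 1 - m ∉ S := by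
  have hdual : ((c - 1 - m : ℕ) : ℤ) = c - 1 - m := by omega
  rw [← natCast_mem_map_natCast, hS, ← hdual, natCast_mem_map_natCast]

end Nat

end AddSubmonoid

theorem Set.ncard_setOf_notMem_eq_half {S : Set ℕ} {c : ℕ} (hle : ∀ m, c ≤ m → m ∈ S)
    (hsymm : ∀ m < c, m ∈ S ↔ c - 1 - m ∉ S) : {m | m ∉ S}.ncard = c / 2 := by
  classical
  have hgaps : {m | m ∉ S} = ↑((Finset.range c).filter (· ∉ S)) := by
    ext m
    simp only [Set.mem_ofPred_eq, Finset.coe_filter, Finset.mem_range, iff_and_self]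
    exact fun hm => not_le.mp (mt (hle m) hm)
  have hcard :
      ((Finset.range c).filter (· ∉ S)).card = ((Finset.range c).filter (· ∈ S)).card := by
    refine Finset.card_nbij' (c - 1 - ·) (c - 1 - ·) ?_ ?_ ?_ ?_ <;>
      intro m hm <;> simp only [Finset.coe_filter, Finset.mem_range, Set.mem_ofPred_eq] at hm ⊢
    · exact ⟨by omega, not_not.mp (mt (hsymm m hm.1).mpr hm.2)⟩
    · exact ⟨by omega, (hsymm m hm.1).mp hm.2⟩
    · omega
    · omega
  have htotal := Finset.card_filter_add_card_filter_not (s := Finset.range c) (p := (· ∉ S))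
  simp only [not_not, Finset.card_range] at htotal
  rw [hgaps, Set.ncard_coe_finset]
  omega

section Gamma

open AddSubmonoid

variable {p : ℕ}

theorem Gamma_zero : Gamma p 0 = ⊤ := by
  have hgen : gammaGen p 0 = {1} := by ext; simp [gammaGen]
  rw [Gamma, hgen, eq_top_iff]
  exact fun m _ => by simp

theorem gammaGen_succ (n : ℕ) :
    gammaGen p (n + 1) = insert (p ^ (n + 1) - 1) ((p * ·) '' gammaGen p n) := by
  have hmul (j : ℕ) : p * (p ^ n - p ^ j) = p ^ (n + 1) - p ^ (j + 1) := by
    rw [Nat.mul_sub, ← pow_succ', ← pow_succ']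
  ext m
  simp only [gammaGen, Set.mem_insert_iff, Set.mem_image, Set.mem_ofPred_eq]
  constructor
  · rintro (rfl | ⟨_ | j, hj, rfl⟩)
    · exact Or.inr ⟨p ^ n, Or.inl rfl, (pow_succ' p n).symm⟩
    · exact Or.inl rfl
    · exact Or.inr ⟨p ^ n - p ^ j, Or.inr ⟨j, by omega, rfl⟩, hmul j⟩
  · rintro (rfl | ⟨x, rfl | ⟨j, hj, rfl⟩, rfl⟩)
    · exact Or.inr ⟨0, n.succ_pos, rfl⟩
    · exact Or.inl (pow_succ' p n).symm
    · exact Or.inr ⟨j + 1, by omega, hmul j⟩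

theorem Gamma_succ (n : ℕ) : Gamma p (n + 1) = (Gamma p n).glue p (p ^ (n + 1) - 1) := by
  rw [Gamma, gammaGen_succ, Set.insert_eq, AddSubmonoid.closure_union, sup_comm, glue, Gamma,
    AddMonoidHom.map_mclosure]
  rfl

theorem pow_sub_one_mem_Gamma (n : ℕ) : p ^ n - 1 ∈ Gamma p n := by
  cases n with
  | zero => exact (Gamma p 0).zero_mem
  | succ n => exact AddSubmonoid.subset_closure (Or.inr ⟨0, n.succ_pos, rfl⟩)

theorem pow_succ_sub_one_mem_Gamma (hp : 0 < p) (n : ℕ) : p ^ (n + 1) - 1 ∈ Gamma p n := by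
  have hdecomp : (p - 1) • p ^ n + (p ^ n - 1) = p ^ (n + 1) - 1 := by
    have h1 : 1 ≤ p := hp
    zify [smul_eq_mul, h1, Nat.one_le_pow n p hp, Nat.one_le_pow (n + 1) p hp]
    ring
  rw [← hdecomp]
  exact (Gamma p n).add_mem ((Gamma p n).nsmul_mem (AddSubmonoid.subset_closure (Or.inl rfl)) _)
    (pow_sub_one_mem_Gamma n)

theorem isSymmetricAbout_Gamma (hp : 0 < p) (n : ℕ) :
    ((Gamma p n).map (Nat.castAddMonoidHom ℤ)).IsSymmetricAbout
      (n * p ^ (n + 1) - (n + 2) * p ^ n + 1) := by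
  induction n with
  | zero =>
    have hmem (z : ℤ) :
        z ∈ (⊤ : AddSubmonoid ℕ).map (Nat.castAddMonoidHom ℤ) ↔ 0 ≤ z := by
      refine ⟨fun ⟨m, _, hm⟩ => hm ▸ m.cast_nonneg, fun hz => ?_⟩
      lift z to ℕ using hz
      exact ⟨z, mem_top z, rfl⟩
    intro z
    norm_num [Gamma_zero, hmem]
    omega
  | succ n ih =>
    have hcast : ((p ^ (n + 1) - 1 : ℕ) : ℤ) = (p : ℤ) ^ (n + 1) - 1 := by
      push_cast [Nat.one_le_pow (n + 1) p hp]
      rfl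
    have hcoprime : IsCoprime ((p ^ (n + 1) - 1 : ℕ) : ℤ) p :=
      ⟨-1, (p : ℤ) ^ n, by rw [hcast]; ring⟩
    rw [Gamma_succ, map_natCast_glue]
    convert ih.glue (natCast_mem_map_natCast.mpr (pow_succ_sub_one_mem_Gamma hp n))
      (by exact_mod_cast hp) hcoprime using 1
    rw [hcast]
    push_cast
    ring

end Gamma

/-- `Γ_{p,n}` is symmetric: for `0 ≤ m ≤ c - 1` one has `m ∈ Γ_{p,n}` iff
`c - 1 - m ∉ Γ_{p,n}`, where `c = n·p^{n+1} - (n+2)·p^n + 2` is the conductor;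
consequently the number of gaps (the genus) equals `c/2`. -/
theorem Gamma_symmetric (p n : ℕ) (hp : p.Prime) (c : ℕ)
    (hc : (c : ℤ) = n * p ^ (n + 1) - (n + 2) * p ^ n + 2) :
    (∀ m, m < c → (m ∈ Gamma p n ↔ c - 1 - m ∉ Gamma p n)) ∧
    {m : ℕ | m ∉ Gamma p n}.ncard = c / 2 := by
  have hS : ((Gamma p n).map (Nat.castAddMonoidHom ℤ)).IsSymmetricAbout (c - 1) := by
    convert isSymmetricAbout_Gamma hp.pos n using 1
    rw [hc]
    ring
  have hsymm (m : ℕ) (hm : m < c) := hS.mem_iff_sub_notMem hm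
  exact ⟨hsymm, Set.ncard_setOf_notMem_eq_half (fun _ => hS.mem_of_le) hsymm⟩
end

section
/- Let p ≥ 3 be a prime and n ≥ 1. The set G = {p^n - p^{n-1}, p^n - p^{n-2}, ..., p^n - 1, p^n} is the unique minimal generating set of the numerical semigroup Γ_{p,n}: no element of G is a sum of two nonzero elements of Γ_{p,n}, and G generates Γ_{p,n}. -/
/-! Every nonzero element of `Γ_{p,n}` is at least its smallest generator `p^n - p^{n-1}`, and
for `p ≥ 3` twice that exceeds `p^n`, the largest generator. So a sum of two nonzero elements of
`Γ_{p,n}` is larger than every generator. -/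

namespace AddSubmonoid

variable {M : Type*} [AddCommMonoid M] [PartialOrder M] [CanonicallyOrderedAdd M]

theorem le_of_mem_closure_of_ne_zero {S : Set M} {m : M} (hS : ∀ s ∈ S, m ≤ s) {x : M}
    (hx : x ∈ closure S) (hx0 : x ≠ 0) : m ≤ x := by
  suffices x = 0 ∨ m ≤ x from this.resolve_left hx0
  clear hx0
  induction hx using closure_induction with
  | mem s hs => exact Or.inr (hS s hs)
  | zero => exact Or.inl rfl
  | add a b _ _ ha hb =>
    rcases ha with rfl | ha
    · simpa using hb
    · exact Or.inr (ha.trans le_self_add)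

theorem add_le_add_of_mem_closure {S : Set M} {m : M} (hS : ∀ s ∈ S, m ≤ s) {x y : M}
    (hx : x ∈ closure S) (hy : y ∈ closure S) (hx0 : x ≠ 0) (hy0 : y ≠ 0) : m + m ≤ x + y :=
  add_le_add (le_of_mem_closure_of_ne_zero hS hx hx0) (le_of_mem_closure_of_ne_zero hS hy hy0)

end AddSubmonoid

theorem le_pow_of_mem_gammaGen {p n g : ℕ} (hg : g ∈ gammaGen p n) : g ≤ p ^ n := by
  rcases hg with rfl | ⟨j, -, rfl⟩
  · exact le_rfl
  · exact Nat.sub_le _ _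

theorem pow_sub_pow_pred_le_of_mem_gammaGen {p n g : ℕ} (hp : 0 < p) (hg : g ∈ gammaGen p n) :
    p ^ n - p ^ (n - 1) ≤ g := by
  rcases hg with rfl | ⟨j, hj, rfl⟩
  · exact Nat.sub_le _ _
  · exact Nat.sub_le_sub_left (Nat.pow_le_pow_right hp (by omega)) _

theorem pow_lt_pow_sub_pow_pred_add {p n : ℕ} (hp3 : 3 ≤ p) (hn : 1 ≤ n) :
    p ^ n < (p ^ n - p ^ (n - 1)) + (p ^ n - p ^ (n - 1)) := by
  have hpow : p ^ n = p * p ^ (n - 1) := by rw [← pow_succ', Nat.sub_add_cancel hn]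
  have hpos : 0 < p ^ (n - 1) := by positivity
  have : 3 * p ^ (n - 1) ≤ p ^ n := hpow ▸ Nat.mul_le_mul_right _ hp3
  omega

theorem Gamma_minimal_generating_general (p n : ℕ) (hp3 : 3 ≤ p)
    (hn : 1 ≤ n) :
    AddSubmonoid.closure (gammaGen p n) = Gamma p n ∧
    ∀ g ∈ gammaGen p n,
      ¬ ∃ a b : ℕ, a ∈ Gamma p n ∧ b ∈ Gamma p n ∧ a ≠ 0 ∧ b ≠ 0 ∧ a + b = g := by
  refine ⟨rfl, ?_⟩
  rintro g hg ⟨a, b, ha, hb, ha0, hb0, rfl⟩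
  have hsum := AddSubmonoid.add_le_add_of_mem_closure
    (fun _ ↦ pow_sub_pow_pred_le_of_mem_gammaGen (by omega)) ha hb ha0 hb0
  exact (pow_lt_pow_sub_pow_pred_add hp3 hn).not_ge (hsum.trans (le_pow_of_mem_gammaGen hg))

/-- For `p ≥ 3` and `n ≥ 1`, the set `G = {p^n - p^{n-1}, …, p^n - 1, p^n}`
is the minimal generating set of `Γ_{p,n}`: it generates `Γ_{p,n}`, and no
element of `G` is a sum of two nonzero elements of `Γ_{p,n}`. -/
theorem Gamma_minimal_generating (p n : ℕ) (hp : p.Prime) (hp3 : 3 ≤ p)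
    (hn : 1 ≤ n) :
    AddSubmonoid.closure (gammaGen p n) = Gamma p n ∧
    ∀ g ∈ gammaGen p n,
      ¬ ∃ a b : ℕ, a ∈ Gamma p n ∧ b ∈ Gamma p n ∧ a ≠ 0 ∧ b ≠ 0 ∧ a + b = g :=
  Gamma_minimal_generating_general p n hp3 hn
end

section
/- Let K be a field of characteristic p > 0 and n ≥ 1. The kernel of the K-algebra homomorphism φ: K[x_0,...,x_{n-1},y] → K[T^{Γ_{p,n}}] given by φ(x_j) = T^{p^n - p^j} and φ(y) = T^{p^n} is the ideal generated by the n polynomials x_{n-1}^p - y^{p-1} and x_j^p - x_{n-1}^p x_{j+1} for 0 ≤ j ≤ n-2. -/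
/-!
Give `x_j` and `y` the degrees `p^n - p^j` and `p^n` of their images, so that `φ` sends the
monomial `x^d` to `T^{wt d}`. Call `d` normal if `d_j < p` for all `j < n`. From
`wt d + ∑_{j<n} d_j p^j = |d| p^n` and `∑_{j<n} d_j p^j < p^n` for normal `d`, the weight of a normal
exponent determines `|d|` and the base-`p` digits `d_0, …, d_{n-1}`, hence `d`; so `φ` is injective
on the span of normal monomials. Each relation rewrites `x_j^p` into a monomial of smaller height
`∑ d_i (n - i)`, so every polynomial is congruent modulo the relations to a normal one, and a kernel
element is congruent to a normal kernel element, which vanishes.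
-/

open MvPolynomial Finsupp

namespace MvPolynomial

variable {σ R : Type*}

section CommSemiring

variable [CommSemiring R]

theorem aeval_X_pow_monomial (w : σ → ℕ) (d : σ →₀ ℕ) (c : R) :
    aeval (fun i => (Polynomial.X : Polynomial R) ^ w i) (monomial d c) =
      Polynomial.C c * Polynomial.X ^ weight w d := by
  simp only [aeval_monomial, Polynomial.algebraMap_eq, weight_apply, Finsupp.prod, smul_eq_mul,
    ← pow_mul, Finset.prod_pow_eq_pow_sum, Finsupp.sum, mul_comm]

theorem eq_zero_of_aeval_X_pow_eq_zero (w : σ → ℕ) {f : MvPolynomial σ R}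
    (hw : Set.InjOn (weight w) (f.support : Set (σ →₀ ℕ)))
    (hf : aeval (fun i => (Polynomial.X : Polynomial R) ^ w i) f = 0) : f = 0 := by
  classical
  ext d
  by_cases hd : d ∈ f.support
  · have hcoeff : (aeval (fun i => (Polynomial.X : Polynomial R) ^ w i) f).coeff (weight w d) =
        coeff d f := by
      conv_lhs => rw [f.as_sum, map_sum]
      simp only [aeval_X_pow_monomial, Polynomial.finsetSum_coeff, Polynomial.coeff_C_mul_X_pow]
      rw [Finset.sum_eq_single_of_mem d hd fun e he hne => if_neg fun h => hne (hw he hd h.symm)]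
      exact if_pos rfl
    rw [← hcoeff, hf, Polynomial.coeff_zero, coeff_zero]
  · rw [MvPolynomial.notMem_support_iff.mp hd, coeff_zero]

end CommSemiring

theorem exists_mem_restrictSupport_sub_mem [CommRing R]
    (I : Ideal (MvPolynomial σ R)) (S : Set (σ →₀ ℕ)) (μ : (σ →₀ ℕ) → ℕ)
    (hred : ∀ d ∉ S, ∃ d', μ d' < μ d ∧ monomial d 1 - monomial d' 1 ∈ I)
    (f : MvPolynomial σ R) : ∃ g ∈ restrictSupport R S, f - g ∈ I := by
  suffices hM : f ∈ restrictSupport R S ⊔ I.restrictScalars R by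
    obtain ⟨g, hg, h, hh, rfl⟩ := Submodule.mem_sup.mp hM
    exact ⟨g, hg, by simpa using hh⟩
  have hmono : ∀ d, (monomial d 1 : MvPolynomial σ R) ∈ restrictSupport R S ⊔ I.restrictScalars R := by
    intro d
    induction h : μ d using Nat.strong_induction_on generalizing d with
    | _ m ih =>
      by_cases hd : d ∈ S
      · refine Submodule.mem_sup_left ((mem_restrictSupport_iff R).mpr ?_)
        exact (Finset.coe_subset.mpr support_monomial_subset).trans (by simpa using hd)
      · obtain ⟨d', hlt, hI⟩ := hred d hd
        rw [← sub_add_cancel (monomial d 1) (monomial d' 1)]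
        exact Submodule.add_mem _ (Submodule.mem_sup_right hI) (ih _ (h ▸ hlt) d' rfl)
  induction f using MvPolynomial.induction_on' with
  | monomial d c =>
    rw [← mul_one c, ← smul_eq_mul, ← smul_monomial]
    exact Submodule.smul_mem _ c (hmono d)
  | add f g hf hg => exact Submodule.add_mem _ hf hg

end MvPolynomial

theorem Nat.eq_of_add_eq_mul_of_lt {e a a' q q' m : ℕ} (h : e + a = q * m) (h' : e + a' = q' * m)
    (ha : a < m) (ha' : a' < m) : a = a' := by
  refine Nat.ModEq.eq_of_lt_of_lt (Nat.ModEq.add_left_cancel' e ?_) ha ha'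
  rw [h, h']
  exact (Nat.modEq_zero_iff_dvd.mpr (dvd_mul_left m q)).trans
    (Nat.modEq_zero_iff_dvd.mpr (dvd_mul_left m q')).symm

theorem Nat.sum_mul_pow_eq_ofDigits (p : ℕ) : ∀ {n : ℕ} (f : Fin n → ℕ),
    ∑ j, f j * p ^ (j : ℕ) = Nat.ofDigits p (List.ofFn f)
  | 0, _ => rfl
  | n + 1, f => by
    rw [Fin.sum_univ_succ, List.ofFn_succ, Nat.ofDigits_cons, ← Nat.sum_mul_pow_eq_ofDigits p,
      Finset.mul_sum]
    simp only [Fin.val_zero, pow_zero, mul_one, Fin.val_succ, pow_succ]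
    congr 1
    exact Finset.sum_congr rfl fun j _ => by ring

section Gamma

variable {K : Type*} [CommRing K] {p n : ℕ}

def gammaWeight (p n : ℕ) (i : Fin (n + 1)) : ℕ :=
  if (i : ℕ) = n then p ^ n else p ^ n - p ^ (i : ℕ)

def gammaHeight (n : ℕ) (i : Fin (n + 1)) : ℕ :=
  n - i

def gammaNormal (p n : ℕ) : Set (Fin (n + 1) →₀ ℕ) :=
  {d | ∀ j : Fin n, d j.castSucc < p}

def gammaRelations (K : Type*) [CommRing K] (p n : ℕ) : Set (MvPolynomial (Fin (n + 1)) K) :=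
  {f | f = X ⟨n - 1, Nat.lt_succ_of_le (Nat.sub_le n 1)⟩ ^ p - X (Fin.last n) ^ (p - 1) ∨
    ∃ j, ∃ h : j + 2 ≤ n,
      f = X ⟨j, Nat.lt_succ_of_lt (Nat.lt_of_succ_lt h)⟩ ^ p -
        X ⟨n - 1, Nat.lt_succ_of_le (Nat.sub_le n 1)⟩ ^ p * X ⟨j + 1, Nat.lt_succ_of_lt h⟩}

theorem weight_gammaWeight_add_sum (hp : 0 < p) (d : Fin (n + 1) →₀ ℕ) :
    weight (gammaWeight p n) d + ∑ j : Fin n, d j.castSucc * p ^ (j : ℕ) = degree d * p ^ n := by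
  simp only [weight_eq_sum, degree_eq_sum, Fin.sum_univ_castSucc, gammaWeight, Fin.val_last,
    Fin.val_castSucc, if_pos, smul_eq_mul, add_mul, Finset.sum_mul]
  rw [add_right_comm, ← Finset.sum_add_distrib]
  congr 1
  refine Finset.sum_congr rfl fun j _ => ?_
  rw [if_neg j.isLt.ne, ← mul_add, Nat.sub_add_cancel (Nat.pow_le_pow_right hp j.isLt.le)]

theorem injOn_weight_gammaWeight (hp : 2 ≤ p) :
    Set.InjOn (weight (gammaWeight p n)) (gammaNormal p n) := by
  intro d hd d' hd' h
  have hdigits : ∀ e ∈ gammaNormal p n, ∀ l ∈ List.ofFn fun j : Fin n => e j.castSucc, l < p :=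
    fun e he => List.forall_mem_ofFn_iff.mpr he
  have hlow_lt : ∀ e ∈ gammaNormal p n, ∑ j : Fin n, e j.castSucc * p ^ (j : ℕ) < p ^ n := by
    intro e he
    rw [Nat.sum_mul_pow_eq_ofDigits]
    simpa using Nat.ofDigits_lt_base_pow_length hp (hdigits e he)
  have hp0 : 0 < p := by omega
  have hk := weight_gammaWeight_add_sum hp0 d
  have hk' := weight_gammaWeight_add_sum hp0 d'
  rw [h] at hk
  have hlow := Nat.eq_of_add_eq_mul_of_lt hk hk' (hlow_lt d hd) (hlow_lt d' hd')
  have hdeg : degree d = degree d' :=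
    Nat.eq_of_mul_eq_mul_right (m := p ^ n) (by positivity) (by rw [← hk, ← hk', hlow])
  rw [Nat.sum_mul_pow_eq_ofDigits, Nat.sum_mul_pow_eq_ofDigits] at hlow
  have hcast := congrFun (List.ofFn_inj.mp
    (Nat.ofDigits_inj_of_len_eq hp (by simp) (hdigits d hd) (hdigits d' hd') hlow))
  ext i
  induction i using Fin.lastCases with
  | last =>
    simp only [degree_eq_sum, Fin.sum_univ_castSucc, hcast] at hdeg
    omega
  | cast j => exact hcast j

theorem aeval_eq_zero_of_mem_gammaRelations (hp : 0 < p) (hn : 1 ≤ n)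
    {f : MvPolynomial (Fin (n + 1)) K} (hf : f ∈ gammaRelations K p n) :
    aeval (fun i => (Polynomial.X : Polynomial K) ^ gammaWeight p n i) f = 0 := by
  obtain ⟨m, rfl⟩ : ∃ m, n = m + 1 := ⟨n - 1, by omega⟩
  rcases hf with rfl | ⟨j, hj, rfl⟩
  · simp only [map_sub, map_pow, aeval_X, ← pow_mul, gammaWeight]
    rw [sub_eq_zero]
    congr 1
    simp only [Nat.add_sub_cancel, Fin.val_last, show m ≠ m + 1 by omega, if_false, if_true]
    rw [Nat.sub_mul, Nat.mul_sub_one, ← pow_succ, ← pow_succ]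
  · simp only [map_sub, map_pow, map_mul, aeval_X, ← pow_mul, ← pow_add, gammaWeight]
    rw [sub_eq_zero]
    congr 1
    simp only [Nat.add_sub_cancel, show j ≠ m + 1 by omega, show j + 1 ≠ m + 1 by omega,
      show m ≠ m + 1 by omega, if_false, Nat.sub_mul, ← pow_succ]
    have h₁ := Nat.pow_le_pow_right hp (show j + 1 ≤ m + 1 by omega)
    have h₂ := Nat.pow_le_pow_right hp (show m + 1 ≤ m + 1 + 1 by omega)
    omega

theorem exists_sub_monomial_mem_span_gammaRelations (hp : 2 ≤ p) (j : Fin n) :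
    ∃ r : Fin (n + 1) →₀ ℕ, weight (gammaHeight n) r < p * (n - j) ∧
      X j.castSucc ^ p - monomial r 1 ∈ Ideal.span (gammaRelations K p n) := by
  by_cases hj : (j : ℕ) + 1 = n
  · refine ⟨single (Fin.last n) (p - 1), ?_, Ideal.subset_span (Or.inl ?_)⟩
    · simp only [weight_single, gammaHeight, Fin.val_last, Nat.sub_self, smul_zero]
      exact Nat.mul_pos (by omega) (by omega)
    · rw [← X_pow_eq_monomial]
      congr 3
      ext
      simp only [Fin.val_castSucc]
      omega
  · refine ⟨single ⟨n - 1, by omega⟩ p + single ⟨j + 1, by omega⟩ 1, ?_,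
      Ideal.subset_span (Or.inr ⟨j, by omega, ?_⟩)⟩
    · simp only [map_add, weight_single, gammaHeight, smul_eq_mul]
      obtain ⟨k, hk⟩ : ∃ k, n - j = k + 2 := ⟨n - j - 2, by omega⟩
      rw [hk, show n - (n - 1) = 1 by omega, show n - (j + 1) = k + 1 by omega]
      nlinarith
    · congr 1
      rw [X_pow_eq_monomial, X, monomial_mul, mul_one]

theorem exists_mem_restrictSupport_gammaNormal_sub_mem (hp : 2 ≤ p)
    (f : MvPolynomial (Fin (n + 1)) K) :
    ∃ g ∈ restrictSupport K (gammaNormal p n), f - g ∈ Ideal.span (gammaRelations K p n) := by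
  refine exists_mem_restrictSupport_sub_mem _ _ (weight (gammaHeight n))
    (fun d hd => ?_) f
  obtain ⟨j, hj⟩ : ∃ j : Fin n, p ≤ d j.castSucc := by simpa [gammaNormal] using hd
  obtain ⟨r, hr, hmem⟩ := exists_sub_monomial_mem_span_gammaRelations (K := K) hp j
  obtain ⟨e, rfl⟩ : ∃ e, d = e + single j.castSucc p :=
    ⟨d - single j.castSucc p, (tsub_add_cancel_of_le (single_le_iff.mpr hj)).symm⟩
  refine ⟨e + r, ?_, ?_⟩
  · simp only [map_add, weight_single, gammaHeight, smul_eq_mul, Fin.val_castSucc]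
    omega
  · have hfactor : monomial (e + single j.castSucc p) (1 : K) - monomial (e + r) 1 =
        monomial e 1 * (X j.castSucc ^ p - monomial r 1) := by
      rw [X_pow_eq_monomial, mul_sub, monomial_mul, monomial_mul, one_mul]
    rw [hfactor]
    exact Ideal.mul_mem_left _ _ hmem

end Gamma

/-- The kernel of the `K`-algebra homomorphism
`φ : K[x_0,…,x_{n-1},y] → K[T^{Γ_{p,n}}] ⊆ K[T]` with `φ(x_j) = T^{p^n-p^j}`
and `φ(y) = T^{p^n}` is generated by the `n` polynomials
`x_{n-1}^p - y^{p-1}` and `x_j^p - x_{n-1}^p·x_{j+1}` for `0 ≤ j ≤ n-2`.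
(The variable `y` is indexed by `n : Fin (n+1)`.) -/
theorem Gamma_kernel (K : Type*) [Field K] (p : ℕ) (hp : p.Prime)
    (n : ℕ) (hn : 1 ≤ n) :
    RingHom.ker (MvPolynomial.aeval (R := K)
        (fun i : Fin (n + 1) =>
          if (i : ℕ) = n then (Polynomial.X : Polynomial K) ^ (p ^ n)
          else (Polynomial.X : Polynomial K) ^ (p ^ n - p ^ (i : ℕ)))) =
      Ideal.span {f : MvPolynomial (Fin (n + 1)) K |
        f = (X (⟨n - 1, by omega⟩ : Fin (n + 1))) ^ p
              - (X (⟨n, by omega⟩ : Fin (n + 1))) ^ (p - 1) ∨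
        ∃ j, ∃ _h : j + 2 ≤ n,
          f = (X (⟨j, by omega⟩ : Fin (n + 1))) ^ p
                - (X (⟨n - 1, by omega⟩ : Fin (n + 1))) ^ p
                  * X (⟨j + 1, by omega⟩ : Fin (n + 1))} := by
  simp only [← pow_ite]
  change RingHom.ker (aeval (R := K) fun i => (Polynomial.X : Polynomial K) ^ gammaWeight p n i) =
    Ideal.span (gammaRelations K p n)
  have hspan_le : Ideal.span (gammaRelations K p n) ≤
      RingHom.ker (aeval (R := K) fun i => (Polynomial.X : Polynomial K) ^ gammaWeight p n i) :=
    Ideal.span_le.mpr fun f hf => aeval_eq_zero_of_mem_gammaRelations hp.pos hn hf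
  refine le_antisymm (fun f hf => ?_) hspan_le
  obtain ⟨g, hg, hfg⟩ := exists_mem_restrictSupport_gammaNormal_sub_mem hp.two_le f
  have hg_ker := RingHom.mem_ker.mp (hspan_le hfg)
  rw [map_sub, RingHom.mem_ker.mp hf, zero_sub, neg_eq_zero] at hg_ker
  have hg_zero := eq_zero_of_aeval_X_pow_eq_zero _
    ((injOn_weight_gammaWeight hp.two_le).mono ((mem_restrictSupport_iff K).mp hg)) hg_ker
  simpa [hg_zero] using hfg
end

section
/- Let K be a field of characteristic p > 0 and n ≥ 1. The quotient algebra K[T^{Γ_{p,n}}]/(T^{p^n}) has dimension exactly p^n over K; in particular it is generated by the classes x_j of T^{p^n - p^j} (0 ≤ j ≤ n-1), which satisfy x_j^p = 0. -/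
/-- The subalgebra `K[T^{Γ_{p,n}}]` of `K[T]` spanned by the monomials `T^a`
with `a ∈ Γ_{p,n}`. -/
noncomputable def gammaAlg (K : Type*) [Field K] (p n : ℕ) :
    Subalgebra K (Polynomial K) :=
  Algebra.adjoin K {f | ∃ a ∈ Gamma p n, f = Polynomial.X ^ a}

open Polynomial Module

section MonomialSubalgebra

variable (R : Type*) [CommSemiring R]

/-- `R[T^S]`, so that `gammaAlg K p n = monomialSubalgebra K (Gamma p n)` by definition. -/
noncomputable def monomialSubalgebra (S : AddSubmonoid ℕ) : Subalgebra R R[X] :=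
  Algebra.adjoin R {f | ∃ a ∈ S, f = X ^ a}

variable {R} {S : AddSubmonoid ℕ}

namespace monomialSubalgebra

theorem X_pow_mem {a : ℕ} (ha : a ∈ S) : (X ^ a : R[X]) ∈ monomialSubalgebra R S :=
  Algebra.subset_adjoin ⟨a, ha, rfl⟩

theorem mem_iff_coeff_eq_zero {f : R[X]} :
    f ∈ monomialSubalgebra R S ↔ ∀ d ∉ S, f.coeff d = 0 := by
  constructor
  · intro hf
    induction hf using Algebra.adjoin_induction with
    | mem f hf =>
      obtain ⟨a, ha, rfl⟩ := hf
      intro d hd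
      rw [coeff_X_pow, if_neg (by rintro rfl; exact hd ha)]
    | algebraMap r =>
      intro d hd
      rw [algebraMap_eq, coeff_C, if_neg (by rintro rfl; exact hd S.zero_mem)]
    | add f g _ _ hf hg =>
      intro d hd
      rw [coeff_add, hf d hd, hg d hd, add_zero]
    | mul f g _ _ hf hg =>
      intro d hd
      rw [coeff_mul]
      refine Finset.sum_eq_zero fun ij hij => ?_
      rw [Finset.HasAntidiagonal.mem_antidiagonal] at hij
      by_cases hi : ij.1 ∈ S
      · rw [hg ij.2 fun hj => hd (hij ▸ S.add_mem hi hj), mul_zero]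
      · rw [hf ij.1 hi, zero_mul]
  · intro hf
    rw [as_sum_support_C_mul_X_pow f]
    refine Subalgebra.sum_mem _ fun i hi => ?_
    have hiS : i ∈ S := by
      by_contra h
      exact mem_support_iff.1 hi (hf i h)
    rw [← smul_eq_C_mul]
    exact Subalgebra.smul_mem _ (X_pow_mem hiS) _

noncomputable def xPow {a : ℕ} (ha : a ∈ S) : monomialSubalgebra R S := ⟨X ^ a, X_pow_mem ha⟩

@[simp]
theorem coe_xPow {a : ℕ} (ha : a ∈ S) : ((xPow ha : monomialSubalgebra R S) : R[X]) = X ^ a :=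
  rfl

theorem closure_eq_adjoin (G : Set ℕ) :
    monomialSubalgebra R (AddSubmonoid.closure G) = Algebra.adjoin R ((X ^ ·) '' G) := by
  refine le_antisymm (Algebra.adjoin_le ?_) (Algebra.adjoin_mono ?_)
  · rintro _ ⟨a, ha, rfl⟩
    induction ha using AddSubmonoid.closure_induction with
    | mem a ha => exact Algebra.subset_adjoin ⟨a, ha, rfl⟩
    | zero => exact pow_zero (X : R[X]) ▸ Subalgebra.one_mem _
    | add a b _ _ ha hb => exact pow_add (X : R[X]) a b ▸ Subalgebra.mul_mem _ ha hb
  · rintro _ ⟨a, ha, rfl⟩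
    exact ⟨a, AddSubmonoid.subset_closure ha, rfl⟩

end monomialSubalgebra

end MonomialSubalgebra

section Apery

variable (S : AddSubmonoid ℕ) (N : ℕ)

/-- The least element of `S` congruent to `r` modulo `N` (junk `0` if there is none); for `N ∈ S`
the `aperyElt S N r`, `r < N`, form the Apéry set of `S` with respect to `N`. -/
noncomputable def aperyElt (r : ℕ) : ℕ := sInf {s | s ∈ S ∧ s ≡ r [MOD N]}

variable {S N}

theorem aperyElt_spec {r : ℕ} (h : ∃ s ∈ S, s ≡ r [MOD N]) :
    aperyElt S N r ∈ S ∧ aperyElt S N r ≡ r [MOD N] :=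
  let ⟨s, hs, hsr⟩ := h
  Nat.sInf_mem (s := {s | s ∈ S ∧ s ≡ r [MOD N]}) ⟨s, hs, hsr⟩

theorem aperyElt_le {r s : ℕ} (hs : s ∈ S) (h : s ≡ r [MOD N]) : aperyElt S N r ≤ s :=
  Nat.sInf_le ⟨hs, h⟩

theorem aperyElt_ne_add (hN : 0 < N) {r s : ℕ} (h : ∃ s ∈ S, s ≡ r [MOD N]) (hs : s ∈ S) :
    aperyElt S N r ≠ s + N := by
  intro heq
  have hsr : s ≡ r [MOD N] := Nat.add_modEq_right.symm.trans (heq ▸ (aperyElt_spec h).2)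
  have := aperyElt_le hs hsr
  omega

theorem eq_aperyElt_or_exists_add (hNS : N ∈ S) {s : ℕ} (hs : s ∈ S) :
    s = aperyElt S N (s % N) ∨ ∃ s' ∈ S, s = s' + N := by
  obtain ⟨hwS, hws⟩ := aperyElt_spec ⟨s, hs, (Nat.mod_modEq s N).symm⟩
  have hle := aperyElt_le hs (Nat.mod_modEq s N).symm
  set w := aperyElt S N (s % N)
  obtain ⟨k, hk⟩ := (Nat.modEq_iff_dvd' hle).1 (hws.trans (Nat.mod_modEq s N))
  rcases k with _ | k
  · exact Or.inl (by omega)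
  · right
    refine ⟨w + k * N, S.add_mem hwS (by simpa using S.nsmul_mem hNS k), ?_⟩
    rw [Nat.mul_succ, Nat.mul_comm N k] at hk
    omega

theorem exists_modEq_of_sub_one_mem (hN : 0 < N) (h : N - 1 ∈ S) (r : ℕ) :
    ∃ s ∈ S, s ≡ r [MOD N] := by
  refine ⟨((N - 1) * r) • (N - 1), S.nsmul_mem h _, ?_⟩
  rw [smul_eq_mul, ← ZMod.natCast_eq_natCast_iff]
  push_cast [Nat.cast_sub (Nat.one_le_iff_ne_zero.2 hN.ne'), ZMod.natCast_self]
  ring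

theorem aperyElt_injective (hS : ∀ r, ∃ s ∈ S, s ≡ r [MOD N]) :
    Function.Injective fun r : Fin N => aperyElt S N r :=
  fun r r' (h : aperyElt S N r = aperyElt S N r') => by
  have hrr' : (r : ℕ) ≡ r' [MOD N] :=
    (aperyElt_spec (hS r)).2.symm.trans (h ▸ (aperyElt_spec (hS r')).2)
  exact Fin.ext (hrr'.eq_of_lt_of_lt r.2 r'.2)

end Apery

theorem Subalgebra.adjoin_eq_top_of_image_val {R A : Type*} [CommSemiring R] [Semiring A]
    [Algebra R A] {T : Subalgebra R A} {u : Set T}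
    (h : Algebra.adjoin R (Subtype.val '' u) = T) : Algebra.adjoin R u = ⊤ :=
  Subalgebra.map_injective (f := T.val) Subtype.val_injective <| by
    rw [← Algebra.adjoin_image, Algebra.map_top, Subalgebra.range_val]
    exact h

theorem Ideal.Quotient.adjoin_range_mk_eq_top {R A ι : Type*} [CommRing R] [CommRing A]
    [Algebra R A] {t : A} {x : ι → A} (h : Algebra.adjoin R (insert t (Set.range x)) = ⊤) :
    Algebra.adjoin R (Set.range fun i => Ideal.Quotient.mk (Ideal.span {t}) (x i)) = ⊤ := by
  have hmap := congrArg (Subalgebra.map (Ideal.Quotient.mkₐ R (Ideal.span {t}))) h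
  rw [← Algebra.adjoin_image, Algebra.map_top,
    (AlgHom.range_eq_top _).2 (Ideal.Quotient.mkₐ_surjective R _), Set.image_insert_eq,
    ← Set.range_comp] at hmap
  rw [← hmap, Ideal.Quotient.mkₐ_eq_mk,
    Ideal.Quotient.eq_zero_iff_mem.2 (Ideal.mem_span_singleton_self t)]
  exact le_antisymm (Algebra.adjoin_mono (Set.subset_insert _ _))
    (Algebra.adjoin_le (Set.insert_subset (Subalgebra.zero_mem _) Algebra.subset_adjoin))

section Quotient

variable {R : Type*} [CommRing R] {S : AddSubmonoid ℕ} {N : ℕ}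

namespace monomialSubalgebra

theorem mem_span_xPow_iff (hNS : N ∈ S) {f : monomialSubalgebra R S} :
    f ∈ Ideal.span {xPow hNS} ↔ ∀ d, (∀ s ∈ S, d ≠ s + N) → (f : R[X]).coeff d = 0 := by
  constructor
  · intro hf d hd
    obtain ⟨g, rfl⟩ := Ideal.mem_span_singleton'.1 hf
    rw [Subalgebra.coe_mul, coe_xPow, coeff_mul_X_pow']
    split_ifs with h
    · exact mem_iff_coeff_eq_zero.1 g.2 _ fun hs => hd _ hs (by omega)
    · rfl
  · intro hf
    obtain ⟨g, hg⟩ := (X_pow_dvd_iff (n := N)).2 fun d hd => hf d fun s _ => by omega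
    have hgS : g ∈ monomialSubalgebra R S := mem_iff_coeff_eq_zero.2 fun d hd => by
      rw [← coeff_X_pow_mul g N d, ← hg]
      exact hf _ fun s hs h => hd (Nat.add_right_cancel h ▸ hs)
    exact Ideal.mem_span_singleton'.2 ⟨⟨g, hgS⟩, Subtype.ext (by simp [hg, mul_comm])⟩

variable (R S N) in
noncomputable def aperyCoeffs : monomialSubalgebra R S →ₗ[R] Fin N → R :=
  LinearMap.pi fun r => (lcoeff R (aperyElt S N r)).comp (monomialSubalgebra R S).val.toLinearMap

theorem aperyCoeffs_apply (f : monomialSubalgebra R S) (r : Fin N) :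
    aperyCoeffs R S N f r = (f : R[X]).coeff (aperyElt S N r) :=
  rfl

theorem ker_aperyCoeffs (hN : 0 < N) (hNS : N ∈ S) (hS : ∀ r, ∃ s ∈ S, s ≡ r [MOD N]) :
    LinearMap.ker (aperyCoeffs R S N) = (Ideal.span {xPow hNS}).restrictScalars R := by
  ext f
  rw [LinearMap.mem_ker, Submodule.restrictScalars_mem, mem_span_xPow_iff, funext_iff]
  constructor
  · intro hf d hd
    by_cases hdS : d ∈ S
    · rcases eq_aperyElt_or_exists_add hNS hdS with h | ⟨s, hs, rfl⟩
      · rw [h]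
        exact hf ⟨d % N, Nat.mod_lt d hN⟩
      · exact absurd rfl (hd s hs)
    · exact mem_iff_coeff_eq_zero.1 f.2 d hdS
  · intro hf r
    exact hf _ fun s hs => aperyElt_ne_add hN (hS r) hs

theorem aperyCoeffs_surjective (hS : ∀ r, ∃ s ∈ S, s ≡ r [MOD N]) :
    Function.Surjective (aperyCoeffs R S N) := by
  intro c
  refine ⟨∑ r, c r • xPow (aperyElt_spec (hS r)).1, funext fun r' => ?_⟩
  simp [aperyCoeffs_apply, coeff_X_pow, (aperyElt_injective hS).eq_iff]

theorem finrank_quotient_span_xPow [Nontrivial R] (hN : 0 < N) (hNS : N ∈ S)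
    (hS : ∀ r, ∃ s ∈ S, s ≡ r [MOD N]) :
    finrank R (monomialSubalgebra R S ⧸ Ideal.span {(xPow hNS : monomialSubalgebra R S)}) = N :=
  calc _ = finrank R (monomialSubalgebra R S ⧸ LinearMap.ker (aperyCoeffs R S N)) := by
        rw [ker_aperyCoeffs hN hNS hS]
        exact (Submodule.Quotient.restrictScalarsEquiv R _).finrank_eq.symm
    _ = N := (LinearMap.quotKerEquivOfSurjective _ (aperyCoeffs_surjective hS)).finrank_eq.trans
        (finrank_fin_fun R)

end monomialSubalgebra

end Quotient

theorem pow_mem_Gamma (p n : ℕ) : p ^ n ∈ Gamma p n :=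
  AddSubmonoid.subset_closure (Or.inl rfl)

theorem pow_sub_pow_mem_Gamma {p n j : ℕ} (hj : j ≤ n) : p ^ n - p ^ j ∈ Gamma p n := by
  rcases hj.lt_or_eq with hj | rfl
  · exact AddSubmonoid.subset_closure (Or.inr ⟨j, hj, rfl⟩)
  · rw [Nat.sub_self]
    exact zero_mem _

theorem gammaGen_eq (p n : ℕ) :
    gammaGen p n = insert (p ^ n) (Set.range fun j : Fin n => p ^ n - p ^ (j : ℕ)) := by
  ext m
  simp [gammaGen, Fin.exists_iff, eq_comm]

theorem pow_sub_pow_mul_eq {p n j : ℕ} (hp : 2 ≤ p) (hj : j < n) :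
    (p ^ n - p ^ j) * p = p ^ n + ((p - 2) * p ^ n + (p ^ n - p ^ (j + 1))) := by
  have h₁ : p ^ j ≤ p ^ n := Nat.pow_le_pow_right (by omega) hj.le
  have h₂ : p ^ (j + 1) ≤ p ^ n := Nat.pow_le_pow_right (by omega) hj
  zify [h₁, h₂, hp]
  ring

open monomialSubalgebra in
theorem Gamma_quotient_dim_general (K : Type*) [Field K] (p : ℕ) (hp : p.Prime)
    (n : ℕ)
    (t : ↥(gammaAlg K p n)) (ht : (t : Polynomial K) = Polynomial.X ^ (p ^ n))
    (x : Fin n → ↥(gammaAlg K p n))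
    (hx : ∀ j : Fin n, (x j : Polynomial K) = Polynomial.X ^ (p ^ n - p ^ (j : ℕ)))
    (I : Ideal ↥(gammaAlg K p n)) (hI : I = Ideal.span {t}) :
    Module.finrank K (↥(gammaAlg K p n) ⧸ I) = p ^ n ∧
    Algebra.adjoin K
      (Set.range (fun j : Fin n => Ideal.Quotient.mk I (x j))) = ⊤ ∧
    ∀ j : Fin n, (Ideal.Quotient.mk I (x j)) ^ p = 0 := by
  subst hI
  refine ⟨?_, ?_, fun j => ?_⟩
  · obtain rfl : t = xPow (pow_mem_Gamma p n) := Subtype.ext ht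
    exact finrank_quotient_span_xPow (pow_pos hp.pos n) _
      (exists_modEq_of_sub_one_mem (pow_pos hp.pos n) (pow_sub_pow_mem_Gamma n.zero_le))
  · refine Ideal.Quotient.adjoin_range_mk_eq_top (Subalgebra.adjoin_eq_top_of_image_val ?_)
    rw [Set.image_insert_eq, ← Set.range_comp, ht]
    calc _ = Algebra.adjoin K ((X ^ ·) '' gammaGen p n) := by
          rw [gammaGen_eq, Set.image_insert_eq, ← Set.range_comp]
          simp only [Function.comp_def, hx]
      _ = gammaAlg K p n := (closure_eq_adjoin _).symm
  · have hb := (Gamma p n).add_mem ((Gamma p n).nsmul_mem (pow_mem_Gamma p n) (p - 2))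
      (pow_sub_pow_mem_Gamma j.2)
    have hxj : x j ^ p = t * ⟨_, X_pow_mem hb⟩ := Subtype.ext <| by
      push_cast
      rw [ht, hx, ← pow_mul, ← pow_add, smul_eq_mul, pow_sub_pow_mul_eq hp.two_le j.2]
    rw [← map_pow, Ideal.Quotient.eq_zero_iff_mem, hxj]
    exact Ideal.mul_mem_right _ _ (Ideal.mem_span_singleton_self t)

/-- The quotient `K[T^{Γ_{p,n}}]/(T^{p^n})` has dimension `p^n` over `K`; it
is generated by the classes `x_j` of `T^{p^n - p^j}` (`0 ≤ j ≤ n-1`), and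
these satisfy `x_j^p = 0`. -/
theorem Gamma_quotient_dim (K : Type*) [Field K] (p : ℕ) (hp : p.Prime)
    [CharP K p] (n : ℕ) (hn : 1 ≤ n)
    (t : ↥(gammaAlg K p n)) (ht : (t : Polynomial K) = Polynomial.X ^ (p ^ n))
    (x : Fin n → ↥(gammaAlg K p n))
    (hx : ∀ j : Fin n, (x j : Polynomial K) = Polynomial.X ^ (p ^ n - p ^ (j : ℕ)))
    (I : Ideal ↥(gammaAlg K p n)) (hI : I = Ideal.span {t}) :
    Module.finrank K (↥(gammaAlg K p n) ⧸ I) = p ^ n ∧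
    Algebra.adjoin K
      (Set.range (fun j : Fin n => Ideal.Quotient.mk I (x j))) = ⊤ ∧
    ∀ j : Fin n, (Ideal.Quotient.mk I (x j)) ^ p = 0 :=
  Gamma_quotient_dim_general K p hp n t ht x hx I hI
end

section
/- Let p be a prime and n ≥ 2. If a and b are generators of Γ_{p,n} taken from the list {p^n, p^n - p^{n-1}, ..., p^n - 1}, then a + b ≥ p^n; equivalently the elements of Γ_{p,n} that are ≤ p^n are exactly 0 together with the generators themselves (assuming n(p-1) ≥ 3). -/
/-!
Every generator `g` satisfies `2 g ≥ p^n`, since `2 p^j ≤ p^(j+1) ≤ p^n` for `j < n`. Hence any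
sum of two or more generators is at least `p^n`, so a nonzero element `m ≤ p^n` of `Γ_{p,n}` is
either a single generator or equal to `p^n`, which is itself a generator.
-/

theorem AddSubmonoid.eq_zero_or_mem_or_le_of_mem_closure {M : Type*} [AddCommMonoid M]
    [PartialOrder M] [CanonicallyOrderedAdd M] {S : Set M} {N : M}
    (hS : ∀ a ∈ S, ∀ b ∈ S, N ≤ a + b) {m : M} (hm : m ∈ closure S) :
    m = 0 ∨ m ∈ S ∨ N ≤ m := by
  induction hm using closure_induction with
  | mem x hx => exact Or.inr (Or.inl hx)
  | zero => exact Or.inl rfl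
  | add x y _ _ ihx ihy =>
    rcases ihx with rfl | hx | hx
    · simpa using ihy
    · rcases ihy with rfl | hy | hy
      · simpa using Or.inr (Or.inl hx)
      · exact Or.inr (Or.inr (hS x hx y hy))
      · exact Or.inr (Or.inr (hy.trans le_add_self))
    · exact Or.inr (Or.inr (hx.trans le_self_add))

theorem pow_le_two_mul_of_mem_gammaGen {p n g : ℕ} (hp : 2 ≤ p) (hg : g ∈ gammaGen p n) :
    p ^ n ≤ 2 * g := by
  rcases hg with rfl | ⟨j, hj, rfl⟩
  · omega
  · have : p ^ j * 2 ≤ p ^ n :=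
      calc p ^ j * 2 ≤ p ^ j * p := Nat.mul_le_mul_left _ hp
        _ = p ^ (j + 1) := (pow_succ p j).symm
        _ ≤ p ^ n := Nat.pow_le_pow_right (by omega) hj
    omega

theorem Gamma_small_elements_general (p n : ℕ) (hp : p.Prime) :
    (∀ a ∈ gammaGen p n, ∀ b ∈ gammaGen p n, p ^ n ≤ a + b) ∧
    (∀ m ∈ Gamma p n, m ≤ p ^ n → m = 0 ∨ m ∈ gammaGen p n) := by
  have hsum : ∀ a ∈ gammaGen p n, ∀ b ∈ gammaGen p n, p ^ n ≤ a + b := fun a ha b hb => by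
    have := pow_le_two_mul_of_mem_gammaGen hp.two_le ha
    have := pow_le_two_mul_of_mem_gammaGen hp.two_le hb
    omega
  refine ⟨hsum, fun m hm hle => ?_⟩
  rcases AddSubmonoid.eq_zero_or_mem_or_le_of_mem_closure hsum hm with h | h | h
  · exact Or.inl h
  · exact Or.inr h
  · exact Or.inr (Or.inl (le_antisymm hle h))

/-- For generators `a, b` of `Γ_{p,n}` one has `a + b ≥ p^n`; equivalently
(assuming `n(p-1) ≥ 3`) the elements of `Γ_{p,n}` that are `≤ p^n` are
exactly `0` together with the generators themselves. -/
theorem Gamma_small_elements (p n : ℕ) (hp : p.Prime) (hn : 2 ≤ n)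
    (h3 : 3 ≤ n * (p - 1)) :
    (∀ a ∈ gammaGen p n, ∀ b ∈ gammaGen p n, p ^ n ≤ a + b) ∧
    (∀ m ∈ Gamma p n, m ≤ p ^ n → m = 0 ∨ m ∈ gammaGen p n) :=
  Gamma_small_elements_general p n hp
end

section
/- Let K be a field of characteristic p > 0 and α, β ∈ K. In the K-algebra B = K[x,y,z]/(y^{p²} - α, z^p - β - α·y^p), the elements v = x^{p²} and u = x - x^p·y - x^{p²}·z + x^{p²}·y^{p+1} satisfy u^{p²} = v - α·v^p - β^p·v^{p²}. -/
open MvPolynomial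

lemma twist_aux_n2 {B : Type*} [CommRing B] (p : ℕ) [Fact p.Prime] [CharP B p]
    (a b c A B' : B) (hb : b ^ p ^ 2 = A) (hc : c ^ p = B' + A * b ^ p) :
    (a - a ^ p * b - a ^ p ^ 2 * c + a ^ p ^ 2 * b ^ (p + 1)) ^ p ^ 2 =
      a ^ p ^ 2 - A * (a ^ p ^ 2) ^ p - B' ^ p * (a ^ p ^ 2) ^ p ^ 2 := by
  have hc2 : c ^ p ^ 2 = B' ^ p + A ^ p * A := by
    rw [pow_two, pow_mul, hc, add_pow_char, mul_pow, ← pow_mul, ← pow_two, hb]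
  have hb2 : (b ^ (p + 1)) ^ p ^ 2 = A ^ p * A := by
    rw [← pow_mul, mul_comm, pow_mul, hb, pow_succ]
  have ha : (a ^ p) ^ p ^ 2 = (a ^ p ^ 2) ^ p := by
    rw [← pow_mul, ← pow_mul, mul_comm]
  rw [add_pow_char_pow, sub_pow_char_pow, sub_pow_char_pow, mul_pow, mul_pow, mul_pow,
    hb, hc2, hb2, ha]
  ring

/-- In `B = K[x,y,z]/(y^{p²} - α, z^p - β - α·y^p)`, the elements
`v = x^{p²}` and `u = x - x^p·y - x^{p²}·z + x^{p²}·y^{p+1}` satisfy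
`u^{p²} = v - α·v^p - β^p·v^{p²}`. -/
theorem twist_identity_n2 (K : Type*) [Field K] (p : ℕ) (hp : p.Prime)
    [CharP K p] (α β : K) (I : Ideal (MvPolynomial (Fin 3) K))
    (hI : I = Ideal.span
      {(X (1 : Fin 3)) ^ (p ^ 2) - C α,
       (X (2 : Fin 3)) ^ p - C β - C α * (X (1 : Fin 3)) ^ p}) :
    (Ideal.Quotient.mk I
        (X 0 - (X 0) ^ p * X 1 - (X 0) ^ (p ^ 2) * X 2
          + (X 0) ^ (p ^ 2) * (X 1) ^ (p + 1))) ^ (p ^ 2) =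
      Ideal.Quotient.mk I
        ((X 0) ^ (p ^ 2) - C α * ((X 0) ^ (p ^ 2)) ^ p
          - C (β ^ p) * ((X (0 : Fin 3)) ^ (p ^ 2)) ^ (p ^ 2)) := by
  haveI : Fact p.Prime := ⟨hp⟩
  -- a point of the vanishing locus in the algebraic closure
  obtain ⟨y0, hy0⟩ := IsAlgClosed.exists_pow_nat_eq
    (k := AlgebraicClosure K) (algebraMap K _ α) (pow_pos hp.pos 2)
  obtain ⟨z0, hz0⟩ := IsAlgClosed.exists_pow_nat_eq
    (k := AlgebraicClosure K) (algebraMap K _ β + algebraMap K _ α * y0 ^ p) hp.pos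
  set φ : MvPolynomial (Fin 3) K →ₐ[K] AlgebraicClosure K :=
    aeval ![0, y0, z0] with hφ
  have hIker : I ≤ RingHom.ker φ.toRingHom := by
    rw [hI, Ideal.span_le]
    rintro f (rfl | rfl) <;> rw [SetLike.mem_coe, RingHom.mem_ker] <;>
      simp [hφ, hy0, hz0, algebraMap_eq]
  haveI : CharP (MvPolynomial (Fin 3) K ⧸ I) p := by
    refine CharP.quotient' p I fun x hx => ?_
    have h1 : ((x : ℕ) : AlgebraicClosure K) = 0 := by
      have := hIker hx
      rw [RingHom.mem_ker] at this
      rwa [AlgHom.toRingHom_eq_coe, AlgHom.coe_ringHom_mk, map_natCast] at this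
    have h2 : ((x : ℕ) : K) = 0 := by
      have := (algebraMap K (AlgebraicClosure K)).injective
      apply this
      rwa [map_natCast, map_zero]
    rw [← map_natCast (C : K →+* MvPolynomial (Fin 3) K), h2, map_zero]
  have hb : (Ideal.Quotient.mk I (X 1)) ^ p ^ 2 = Ideal.Quotient.mk I (C α) := by
    rw [← map_pow, Ideal.Quotient.eq, hI]
    exact Ideal.subset_span (Set.mem_insert _ _)
  have hc : (Ideal.Quotient.mk I (X 2)) ^ p =
      Ideal.Quotient.mk I (C β) + Ideal.Quotient.mk I (C α) *
        (Ideal.Quotient.mk I (X 1)) ^ p := by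
    rw [← map_pow, ← map_pow, ← map_mul, ← map_add, Ideal.Quotient.eq, hI]
    have : (X (2 : Fin 3) : MvPolynomial (Fin 3) K) ^ p -
        (C β + C α * X 1 ^ p) = X 2 ^ p - C β - C α * X 1 ^ p := by ring
    rw [this]
    exact Ideal.subset_span (Set.mem_insert_of_mem _ rfl)
  have hβ : (C (β ^ p) : MvPolynomial (Fin 3) K) = (C β) ^ p := map_pow C β p
  rw [hβ]
  simp only [map_add, map_sub, map_mul, map_pow]
  exact twist_aux_n2 p _ _ _ _ _ hb hc
end
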